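/- arXiv:2603.27363 — 4 statements merged into one kernel-verified Lean document; each statement's English description precedes it below -/
import Mathlib

section
/- With the weighted-graph setup below, let T̂ : F → ℝ be a map with T̂ f > 0 for all f and T̂ ∈ 𝒯. Then the geodesic curvatures of all subpatterns are uniformly bounded: there exists a constant M > 0 (depending only on the graph data and T̂) such that for every k : F → ℝ with k f > 0 for all f and Ttot k f ≤ T̂ f for all f, one has k f ≤ M for every f ∈ F. (This is the boundedness claim in Step III of the Perron-method proof, which makes the supremum of the subpattern family well defined.) -/
open Real Filter Finset

/-- Total geodesic curvature of the arc of the first circle bounding the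
intersection bigon of two spherical disks with boundary geodesic curvatures
`a`, `b` intersecting at interior angle `θ`. -/
noncomputable def T (a b θ : ℝ) : ℝ :=
  (2 * a / Real.sqrt (a ^ 2 + 1)) *
    Real.arctan (Real.sin θ * Real.sqrt (a ^ 2 + 1) / (b + a * Real.cos θ))

/-- Total geodesic curvature of the boundary circle of the disk of the face `f`,
for the weighted graph with edge-to-faces map `ε`, weights `θ`, and geodesic
curvature vector `k`. -/
noncomputable def Ttot {F E : Type*} [Fintype E] [DecidableEq F]
    (ε : E → F × F) (θ : E → ℝ) (k : F → ℝ) (f : F) : ℝ :=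
  ∑ e : E,
    ((if (ε e).1 = f then T (k f) (k (ε e).2) (θ e) else 0) +
     (if (ε e).2 = f then T (k f) (k (ε e).1) (θ e) else 0))


section Stmt16Helpers

lemma sqrtA_pos (a : ℝ) : 0 < Real.sqrt (a^2+1) := Real.sqrt_pos.mpr (by positivity)

lemma le_sqrtA {a : ℝ} (ha : 0 ≤ a) : a ≤ Real.sqrt (a^2+1) := by
  calc a = Real.sqrt (a^2) := (Real.sqrt_sq ha).symm
  _ ≤ _ := Real.sqrt_le_sqrt (by linarith)

lemma sqrtA_le {a : ℝ} (ha : 0 ≤ a) : Real.sqrt (a^2+1) ≤ a + 1 := by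
  rw [show a + 1 = Real.sqrt ((a+1)^2) from (Real.sqrt_sq (by linarith)).symm]
  exact Real.sqrt_le_sqrt (by nlinarith)

lemma arctan_nonneg' {x : ℝ} (hx : 0 ≤ x) : 0 ≤ Real.arctan x := by
  have := Real.arctan_strictMono.monotone hx
  simpa [Real.arctan_zero] using this

lemma arctan_le_self' {x : ℝ} (hx : 0 ≤ x) : Real.arctan x ≤ x := by
  have h1 := Real.le_tan (arctan_nonneg' hx) (Real.arctan_lt_pi_div_two x)
  simpa [Real.tan_arctan] using h1


lemma Galg (a b c A B : ℝ) (ha : 0 < a) (hb : 0 < b) (hc : 0 ≤ c) (hc1 : c^2 ≤ 1)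
    (haA : a ≤ A) (hbB : b ≤ B) :
    (b+a*c)*(a+b*c) ≤ c*(A*(a+b*c) + B*(b+a*c)) + (1-c^2)*(A*B) := by
  have h1 : 0 ≤ c*(A*a - a^2) := mul_nonneg hc (by nlinarith)
  have h2 : 0 ≤ c*(B*b - b^2) := mul_nonneg hc (by nlinarith)
  have h3 : 0 ≤ c^2*(A*b - a*b) := mul_nonneg (sq_nonneg c) (by nlinarith)
  have h4 : 0 ≤ c^2*(B*a - a*b) := mul_nonneg (sq_nonneg c) (by nlinarith)
  have h5 : 0 ≤ (1-c^2)*(A*B - a*b) := mul_nonneg (by linarith) (by nlinarith)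
  nlinarith [h1, h2, h3, h4, h5]

set_option maxHeartbeats 1000000 in
/-- Key inequality: sum of the two arctans is at least θ. -/
lemma key (a b θ : ℝ) (ha : 0 < a) (hb : 0 < b) (hθ1 : 0 < θ) (hθ2 : θ ≤ π/2) :
    θ ≤ Real.arctan (Real.sin θ * Real.sqrt (a^2+1) / (b + a*Real.cos θ))
      + Real.arctan (Real.sin θ * Real.sqrt (b^2+1) / (a + b*Real.cos θ)) := by
  have hpi := Real.pi_pos
  set A := Real.sqrt (a^2+1) with hA'
  set B := Real.sqrt (b^2+1) with hB'
  have hA : 0 < A := sqrtA_pos a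
  have hB : 0 < B := sqrtA_pos b
  have haA : a ≤ A := le_sqrtA ha.le
  have hbB : b ≤ B := le_sqrtA hb.le
  have hs : 0 < Real.sin θ := Real.sin_pos_of_pos_of_lt_pi hθ1 (by linarith)
  have hc : 0 ≤ Real.cos θ := Real.cos_nonneg_of_mem_Icc ⟨by linarith, hθ2⟩
  have hs1 : Real.sin θ ≤ 1 := Real.sin_le_one θ
  have hp : 0 < b + a*Real.cos θ := by nlinarith
  have hq : 0 < a + b*Real.cos θ := by nlinarith
  set x := Real.sin θ * A / (b + a*Real.cos θ) with hx'
  set y := Real.sin θ * B / (a + b*Real.cos θ) with hy'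
  have hx : 0 < x := div_pos (mul_pos hs hA) hp
  have hy : 0 < y := div_pos (mul_pos hs hB) hq
  by_cases hxy : x * y < 1
  · -- need cos θ > 0
    have hc' : 0 < Real.cos θ := by
      rcases hc.lt_or_eq with h | h
      · exact h
      · exfalso
        have hsin1 : Real.sin θ = 1 := by
          have := Real.sin_sq_add_cos_sq θ
          nlinarith
        rw [hx', hy', hsin1, ← h] at hxy
        have : (1:ℝ) ≤ A / (b + a*0) * (B / (a + b*0)) := by
          rw [mul_zero, add_zero, mul_zero, add_zero]
          rw [div_mul_div_comm, le_div_iff₀ (by positivity)]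
          nlinarith
        simp only [one_mul] at hxy
        linarith
    have hθlt : θ < π/2 := lt_of_le_of_ne hθ2 (by
      intro h; rw [h] at hc'; simp at hc')
    rw [Real.arctan_add hxy]
    have htan : Real.tan θ ≤ (x + y) / (1 - x*y) := by
      rw [Real.tan_eq_sin_div_cos, div_le_div_iff₀ hc' (by linarith)]
      -- sin θ * (1 - x*y) ≤ (x+y) * cos θ
      set s := Real.sin θ
      set c := Real.cos θ
      set p := b + a*c
      set q := a + b*c
      have hs2 : s^2 = 1 - c^2 := Real.sin_sq θ
      have hc1 : c^2 ≤ 1 := by nlinarith [Real.sin_sq_add_cos_sq θ, sq_nonneg s]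
      have hG := Galg a b c A B ha hb hc hc1 haA hbB
      have hiden : (x + y) * c - s * (1 - x*y)
          = s * ((c*(A*q + B*p) + s^2*(A*B)) - p*q) / (p*q) := by
        rw [hx', hy']
        field_simp
        ring
      have : 0 ≤ (x + y) * c - s * (1 - x*y) := by
        rw [hiden]
        apply div_nonneg _ (by positivity)
        apply mul_nonneg hs.le
        have : c*(A*q + B*p) + s^2*(A*B) = c*(A*(a+b*c) + B*(b+a*c)) + (1-c^2)*(A*B) := by
          rw [hs2]
        rw [this]
        have hpq : p*q = (b+a*c)*(a+b*c) := rfl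
        linarith [hG]
      linarith
    calc θ = Real.arctan (Real.tan θ) := (Real.arctan_tan (by linarith) hθlt).symm
    _ ≤ _ := Real.arctan_strictMono.monotone htan
  · push_neg at hxy
    have hinv : x⁻¹ ≤ y := by
      rw [inv_eq_one_div, div_le_iff₀ hx]
      linarith [mul_comm x y]
    have h2 : π/2 - Real.arctan x ≤ Real.arctan y := by
      rw [← Real.arctan_inv_of_pos hx]
      exact Real.arctan_strictMono.monotone hinv
    linarith


section
variable {a b c C θ : ℝ}

lemma sinθpos (hθ1 : 0 < θ) (hθ2 : θ ≤ π/2) : 0 < Real.sin θ :=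
  Real.sin_pos_of_pos_of_lt_pi hθ1 (by linarith [Real.pi_pos])

lemma cosθnonneg (hθ1 : 0 < θ) (hθ2 : θ ≤ π/2) : 0 ≤ Real.cos θ :=
  Real.cos_nonneg_of_mem_Icc ⟨by linarith [Real.pi_pos], hθ2⟩

lemma arg_nonneg (ha : 0 < a) (hb : 0 < b) (hθ1 : 0 < θ) (hθ2 : θ ≤ π/2) :
    0 ≤ Real.sin θ * Real.sqrt (a^2+1) / (b + a * Real.cos θ) := by
  have h1 := sinθpos hθ1 hθ2
  have h2 := cosθnonneg hθ1 hθ2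
  have := sqrtA_pos a
  have hp : 0 < b + a*Real.cos θ := by nlinarith
  positivity

lemma T_nonneg (ha : 0 < a) (hb : 0 < b) (hθ1 : 0 < θ) (hθ2 : θ ≤ π/2) :
    0 ≤ T a b θ := by
  apply mul_nonneg
  · have := sqrtA_pos a; positivity
  · exact arctan_nonneg' (arg_nonneg ha hb hθ1 hθ2)

lemma pref_lb (hC : 0 < C) (hCa : C ≤ a) :
    2*C/(C+1) ≤ 2 * a / Real.sqrt (a ^ 2 + 1) := by
  have ha : 0 < a := hC.trans_le hCa
  have h1 : Real.sqrt (a^2+1) ≤ a + 1 := sqrtA_le ha.le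
  have h2 : 0 < Real.sqrt (a^2+1) := sqrtA_pos a
  calc 2*C/(C+1) ≤ 2*a/(a+1) := by
        rw [div_le_div_iff₀ (by linarith) (by linarith)]; nlinarith
  _ ≤ 2*a/Real.sqrt (a^2+1) := by
        apply div_le_div_of_nonneg_left (by linarith) h2 h1

lemma pref_ub (ha : 0 ≤ a) : 2 * a / Real.sqrt (a ^ 2 + 1) ≤ 2 := by
  have h1 : a ≤ Real.sqrt (a^2+1) := le_sqrtA ha
  have h2 : 0 < Real.sqrt (a^2+1) := sqrtA_pos a
  rw [div_le_iff₀ h2]; linarith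

/-- lower bound for an edge with both endpoints heavy -/
lemma Tlow2 (hC : 1 ≤ C) (hCa : C ≤ a) (hCb : C ≤ b) (hθ1 : 0 < θ) (hθ2 : θ ≤ π/2) :
    2*θ - π/C ≤ T a b θ + T b a θ := by
  have hC0 : (0:ℝ) < C := by linarith
  have ha : 0 < a := hC0.trans_le hCa
  have hb : 0 < b := hC0.trans_le hCb
  have hxn := arg_nonneg ha hb hθ1 hθ2
  have hyn := arg_nonneg hb ha hθ1 hθ2
  have hxa := arctan_nonneg' hxn
  have hya := arctan_nonneg' hyn
  have hk := key a b θ ha hb hθ1 hθ2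
  have hpa := pref_lb hC0 hCa
  have hpb := pref_lb hC0 hCb
  have hP : (0:ℝ) ≤ 2*C/(C+1) := by positivity
  have h1 : 2*C/(C+1) * (Real.arctan (Real.sin θ * Real.sqrt (a^2+1) / (b + a*Real.cos θ))
      + Real.arctan (Real.sin θ * Real.sqrt (b^2+1) / (a + b*Real.cos θ))) ≤ T a b θ + T b a θ := by
    unfold T
    rw [mul_add]
    gcongr <;> assumption
  have h2 : 2*C/(C+1) * θ ≤ 2*C/(C+1) * (Real.arctan _ + Real.arctan _) :=
    mul_le_mul_of_nonneg_left hk hP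
  have h3 : 2*θ - π/C ≤ 2*C/(C+1) * θ := by
    have hnum : 0 ≤ (C*(π - 2*θ) + π)/(C*(C+1)) := by
      apply div_nonneg _ (by positivity)
      have h4 : 0 ≤ C*(π - 2*θ) := mul_nonneg hC0.le (by linarith)
      linarith [Real.pi_pos]
    have heq : 2*C/(C+1) * θ = 2*θ - π/C + (C*(π - 2*θ) + π)/(C*(C+1)) := by
      field_simp
      ring
    linarith
  linarith

lemma hP2' (hC0 : 0 < C) : 2 - 2/C ≤ 2*C/(C+1) := by
  have hrw : 2 - 2/C = (2*C - 2)/C := by field_simp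
  rw [hrw, div_le_div_iff₀ hC0 (by linarith)]
  nlinarith

/-- lower bound for an edge with one heavy endpoint (the first) and light second -/
lemma Tlow1 (hC : 1 ≤ C) (hc : 0 < c) (hCa : C ≤ a) (hb : 0 < b) (hbc : b ≤ c)
    (hθ1 : 0 < θ) (hθ2 : θ ≤ π/2) :
    2*θ - (π/C + 2*(c+1)/C) ≤ T a b θ := by
  have hC0 : (0:ℝ) < C := by linarith
  have ha : 0 < a := hC0.trans_le hCa
  have hk := key a b θ ha hb hθ1 hθ2
  have hs1 : Real.sin θ ≤ 1 := Real.sin_le_one θ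
  have hsp := sinθpos hθ1 hθ2
  have hcn := cosθnonneg hθ1 hθ2
  have hB : 0 < Real.sqrt (b^2+1) := sqrtA_pos b
  have hyn := arg_nonneg hb ha hθ1 hθ2
  have hy_le : Real.arctan (Real.sin θ * Real.sqrt (b^2+1) / (a + b*Real.cos θ)) ≤ (c+1)/C := by
    have hnum : Real.sin θ * Real.sqrt (b^2+1) ≤ c + 1 := by
      have h1 : Real.sqrt (b^2+1) ≤ b + 1 := sqrtA_le hb.le
      nlinarith
    have hden : C ≤ a + b*Real.cos θ := by nlinarith
    have hyy : Real.sin θ * Real.sqrt (b^2+1) / (a + b*Real.cos θ) ≤ (c+1)/C :=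
      div_le_div₀ (by linarith) hnum hC0 hden
    exact (arctan_le_self' hyn).trans hyy
  have hx_ge : θ - (c+1)/C ≤ Real.arctan (Real.sin θ * Real.sqrt (a^2+1) / (b + a*Real.cos θ)) := by
    linarith
  have hpiC : (0:ℝ) < π/C := by positivity
  by_cases hcase : 0 ≤ θ - (c+1)/C
  · have hpa := pref_lb hC0 hCa
    have hprefn : (0:ℝ) ≤ 2*a/Real.sqrt (a^2+1) := by
      have := sqrtA_pos a; positivity
    have hmain : 2*C/(C+1) * (θ - (c+1)/C) ≤ T a b θ := by
      unfold T
      exact mul_le_mul hpa hx_ge hcase hprefn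
    have hnum : 0 ≤ (C*(π - 2*θ) + π + 2*(c+1))/(C*(C+1)) := by
      apply div_nonneg _ (by positivity)
      have h4 : 0 ≤ C*(π - 2*θ) := mul_nonneg hC0.le (by linarith)
      linarith [Real.pi_pos]
    have heq : 2*C/(C+1) * (θ - (c+1)/C)
        = 2*θ - (π/C + 2*(c+1)/C) + (C*(π - 2*θ) + π + 2*(c+1))/(C*(C+1)) := by
      field_simp
      ring
    linarith
  · have h0 := T_nonneg ha hb hθ1 hθ2
    push_neg at hcase
    have hcc : θ*C < c + 1 := by
      have := (lt_div_iff₀ hC0).mp (by linarith : θ < (c+1)/C)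
      linarith
    have h5 : 2*θ ≤ 2*(c+1)/C := by
      rw [le_div_iff₀ hC0]; nlinarith
    linarith

end

end Stmt16Helpers

theorem stmt_16 {F E : Type*} [Fintype F] [Fintype E] [Nonempty F] [DecidableEq F]
    (ε : E → F × F) (θ : E → ℝ) (hθ : ∀ e, 0 < θ e ∧ θ e ≤ Real.pi / 2)
    (hadj : ∀ f : F, ∃ e : E, (ε e).1 = f ∨ (ε e).2 = f)
    (That : F → ℝ) (hpos : ∀ f, 0 < That f)
    (hT : ∀ F' : Finset F, F'.Nonempty →
      ∑ f ∈ F', That f <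
        ∑ e ∈ Finset.univ.filter (fun e => (ε e).1 ∈ F' ∨ (ε e).2 ∈ F'),
          2 * θ e) :
    ∃ M : ℝ, 0 < M ∧ ∀ k : F → ℝ, (∀ f, 0 < k f) →
      (∀ f, Ttot ε θ k f ≤ That f) → ∀ f, k f ≤ M := by
  classical
  -- E is nonempty
  obtain ⟨f0⟩ := ‹Nonempty F›
  obtain ⟨e0, -⟩ := hadj f0
  have hEcard : 0 < Fintype.card E := Fintype.card_pos_iff.mpr ⟨e0⟩
  set nE : ℝ := (Fintype.card E : ℝ) with hnE
  have hnEpos : 0 < nE := by rw [hnE]; exact_mod_cast hEcard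
  -- the minimal gap γ
  set S : Finset (Finset F) :=
    Finset.univ.filter (fun F' : Finset F => F'.Nonempty) with hS
  have hSne : S.Nonempty := ⟨Finset.univ, by simp [hS, Finset.univ_nonempty]⟩
  set gap : Finset F → ℝ := fun F' =>
    (∑ e ∈ Finset.univ.filter (fun e => (ε e).1 ∈ F' ∨ (ε e).2 ∈ F'), 2 * θ e)
      - ∑ f ∈ F', That f with hgap
  set γ : ℝ := S.inf' hSne gap with hγ
  have hγpos : 0 < γ := by
    rw [hγ, Finset.lt_inf'_iff]
    intro F' hF'
    have hne : F'.Nonempty := by simpa [hS] using hF'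
    have := hT F' hne
    simp only [hgap]
    linarith
  have hγle : ∀ F' : Finset F, F'.Nonempty → γ ≤ gap F' := by
    intro F' hne
    exact Finset.inf'_le gap (by simp [hS, hne])
  set ρ : ℝ := γ / (2 * nE) with hρ
  have hρpos : 0 < ρ := by positivity
  -- threshold sequence
  set c : ℕ → ℝ := fun n =>
    Nat.rec (1:ℝ) (fun _ p => max (p+1) (max (2*π/ρ) (4*(p+1)/ρ))) n with hc
  have hc0 : c 0 = 1 := rfl
  have hcstep : ∀ n, c n + 1 ≤ c (n+1) := fun n => le_max_left _ _
  have hcge1 : ∀ n, 1 ≤ c n := by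
    intro n; induction n with
    | zero => simp [hc0]
    | succ n ih => have := hcstep n; linarith
  have hcmono : StrictMono c := strictMono_nat_of_lt_succ (fun n => by
    have := hcstep n; linarith)
  have hcbound : ∀ n, π/(c (n+1)) + 2*(c n + 1)/(c (n+1)) ≤ ρ := by
    intro n
    have hC1 : (0:ℝ) < c (n+1) := by linarith [hcge1 (n+1)]
    have hcn : (0:ℝ) < c n + 1 := by linarith [hcge1 n]
    have h1 : 2*π/ρ ≤ c (n+1) := le_trans (le_max_left _ _) (le_max_right _ _)
    have h2 : 4*(c n + 1)/ρ ≤ c (n+1) := le_trans (le_max_right _ _) (le_max_right _ _)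
    have e1 : π/(c (n+1)) ≤ ρ/2 := by
      rw [div_le_div_iff₀ hC1 (by norm_num)]
      have := (div_le_iff₀ hρpos).mp h1
      linarith
    have e2 : 2*(c n + 1)/(c (n+1)) ≤ ρ/2 := by
      rw [div_le_div_iff₀ hC1 (by norm_num)]
      have := (div_le_iff₀ hρpos).mp h2
      linarith
    linarith
  set N := Fintype.card F with hN
  have hNpos : 0 < N := Fintype.card_pos
  refine ⟨c N, by linarith [hcge1 N], ?_⟩
  intro k hk hTt
  by_contra hcon
  push_neg at hcon
  obtain ⟨f1, hf1⟩ := hcon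
  -- pigeonhole: some gap interval is empty
  have hgapex : ∃ i < N, ∀ f : F, ¬(c i ≤ k f ∧ k f < c (i+1)) := by
    by_contra hno
    push_neg at hno
    have hno' : ∀ i : Fin N, ∃ f, c i ≤ k f ∧ k f < c (i+1) := fun i => hno i i.2
    choose g hg1 hg2 using hno'
    have hlt : ∀ i j : Fin N, (i:ℕ) < (j:ℕ) → g i ≠ g j := by
      intro i j hij hEq
      have h1 : k (g i) < c ((i:ℕ)+1) := hg2 i
      have h2 : c ((i:ℕ)+1) ≤ c (j:ℕ) := hcmono.monotone hij
      have h3 : c (j:ℕ) ≤ k (g j) := hg1 j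
      rw [hEq] at h1
      linarith
    have hinj : Function.Injective g := by
      intro i j hEq
      rcases lt_trichotomy (i:ℕ) (j:ℕ) with h | h | h
      · exact absurd hEq (hlt i j h)
      · exact Fin.ext h
      · exact absurd hEq.symm (hlt j i h)
    have hne1 : ∀ i : Fin N, g i ≠ f1 := by
      intro i hEq
      have h1 : k (g i) < c ((i:ℕ)+1) := hg2 i
      have h2 : c ((i:ℕ)+1) ≤ c N := hcmono.monotone i.2
      rw [hEq] at h1
      linarith
    have hinj2 : Function.Injective (fun i : Fin N => (⟨g i, hne1 i⟩ : {x : F // x ≠ f1})) := by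
      intro i j hEq
      exact hinj (congrArg Subtype.val hEq)
    have hcard := Fintype.card_le_of_injective _ hinj2
    have hcard2 : Fintype.card {x : F // x ≠ f1} = N - 1 := by
      have h := Fintype.card_subtype_compl (fun x : F => x = f1)
      simpa [Fintype.card_subtype_eq, hN] using h
    rw [Fintype.card_fin, hcard2] at hcard
    omega
  obtain ⟨i, hiN, hgapempty⟩ := hgapex
  -- the heavy set
  set F' : Finset F := Finset.univ.filter (fun f => c (i+1) ≤ k f) with hF'
  have hf1mem : f1 ∈ F' := by
    simp only [hF', Finset.mem_filter, Finset.mem_univ, true_and]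
    have : c (i+1) ≤ c N := hcmono.monotone hiN
    linarith
  have hF'ne : F'.Nonempty := ⟨f1, hf1mem⟩
  have hin : ∀ f ∈ F', c (i+1) ≤ k f := by
    intro f hf; simpa [hF'] using hf
  have hout : ∀ f : F, f ∉ F' → k f < c i := by
    intro f hf
    have h1 : ¬ (c (i+1) ≤ k f) := by simpa [hF'] using hf
    push_neg at h1
    by_contra h2
    push_neg at h2
    exact hgapempty f ⟨h2, h1⟩
  set C := c (i+1) with hC
  set cc := c i with hcc
  have hC1 : 1 ≤ C := by rw [hC]; exact hcge1 (i+1)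
  have hccpos : (0:ℝ) < cc := by rw [hcc]; linarith [hcge1 i]
  have hDρ : π/C + 2*(cc+1)/C ≤ ρ := by rw [hC, hcc]; exact hcbound i
  have hpiC : 0 < π/C := by positivity
  -- rewrite the sum of Ttot over F' as a sum over edges
  have hsum : ∑ f ∈ F', Ttot ε θ k f
      = ∑ e : E, ((if (ε e).1 ∈ F' then T (k (ε e).1) (k (ε e).2) (θ e) else 0) +
                  (if (ε e).2 ∈ F' then T (k (ε e).2) (k (ε e).1) (θ e) else 0)) := by
    unfold Ttot
    rw [Finset.sum_comm]
    congr 1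
    funext e
    rw [Finset.sum_add_distrib]
    congr 1
    · rw [Finset.sum_ite_eq F' (ε e).1 (fun f => T (k f) (k (ε e).2) (θ e))]
    · rw [Finset.sum_ite_eq F' (ε e).2 (fun f => T (k f) (k (ε e).1) (θ e))]
  -- per-edge lower bound
  set EF : Finset E := Finset.univ.filter (fun e => (ε e).1 ∈ F' ∨ (ε e).2 ∈ F') with hEF
  have hperedge : ∀ e ∈ EF,
      2*θ e - ρ ≤ (if (ε e).1 ∈ F' then T (k (ε e).1) (k (ε e).2) (θ e) else 0) +
                  (if (ε e).2 ∈ F' then T (k (ε e).2) (k (ε e).1) (θ e) else 0) := by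
    intro e he
    have hmem : (ε e).1 ∈ F' ∨ (ε e).2 ∈ F' := by simpa [hEF] using he
    obtain ⟨hθ1, hθ2⟩ := hθ e
    by_cases h1 : (ε e).1 ∈ F' <;> by_cases h2 : (ε e).2 ∈ F'
    · simp only [h1, h2, if_pos]
      have := Tlow2 hC1 (hin _ h1) (hin _ h2) hθ1 hθ2
      have h3 : 2*(cc+1)/C > 0 := by positivity
      linarith
    · simp only [h1, if_pos, h2, if_neg, not_false_iff, add_zero]
      have hb2 : k (ε e).2 < cc := hout _ h2
      have := Tlow1 hC1 hccpos (hin _ h1) (hk (ε e).2) (le_of_lt hb2) hθ1 hθ2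
      linarith
    · simp only [h1, if_neg, not_false_iff, h2, if_pos, zero_add]
      have hb2 : k (ε e).1 < cc := hout _ h1
      have := Tlow1 hC1 hccpos (hin _ h2) (hk (ε e).1) (le_of_lt hb2) hθ1 hθ2
      linarith
    · tauto
  have hnonneg : ∀ e : E,
      0 ≤ (if (ε e).1 ∈ F' then T (k (ε e).1) (k (ε e).2) (θ e) else 0) +
          (if (ε e).2 ∈ F' then T (k (ε e).2) (k (ε e).1) (θ e) else 0) := by
    intro e
    obtain ⟨hθ1, hθ2⟩ := hθ e
    apply add_nonneg
    · split
      · exact T_nonneg (hk _) (hk _) hθ1 hθ2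
      · exact le_refl 0
    · split
      · exact T_nonneg (hk _) (hk _) hθ1 hθ2
      · exact le_refl 0
  -- put it together
  have hchain1 : ∑ e ∈ EF, (2*θ e - ρ) ≤ ∑ f ∈ F', Ttot ε θ k f := by
    rw [hsum]
    calc ∑ e ∈ EF, (2*θ e - ρ)
        ≤ ∑ e ∈ EF, ((if (ε e).1 ∈ F' then T (k (ε e).1) (k (ε e).2) (θ e) else 0) +
                  (if (ε e).2 ∈ F' then T (k (ε e).2) (k (ε e).1) (θ e) else 0)) :=
          Finset.sum_le_sum hperedge
      _ ≤ ∑ e : E, _ := Finset.sum_le_sum_of_subset_of_nonneg (Finset.filter_subset _ _)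
          (fun e _ _ => hnonneg e)
  have hchain2 : ∑ e ∈ EF, (2*θ e - ρ) = (∑ e ∈ EF, 2*θ e) - (EF.card : ℝ) * ρ := by
    rw [Finset.sum_sub_distrib]
    simp [Finset.sum_const, nsmul_eq_mul]
  have hcardEF : (EF.card : ℝ) ≤ nE := by
    rw [hnE]
    exact_mod_cast Finset.card_le_card (Finset.subset_univ EF) |>.trans (le_of_eq (Finset.card_univ))
  have hTtle : ∑ f ∈ F', Ttot ε θ k f ≤ ∑ f ∈ F', That f := Finset.sum_le_sum (fun f _ => hTt f)
  have hgapF' : γ ≤ gap F' := hγle F' hF'ne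
  have hfinal : (EF.card : ℝ) * ρ ≤ γ/2 := by
    have : (EF.card : ℝ) * ρ ≤ nE * ρ := mul_le_mul_of_nonneg_right hcardEF hρpos.le
    have h2 : nE * ρ = γ/2 := by
      rw [hρ]; field_simp
    linarith
  simp only [hgap] at hgapF'
  linarith
end

section
/- With the weighted-graph setup below, let T̂ : F → ℝ with T̂ f > 0 for all f and T̂ ∈ 𝒯, and let k̂ be the unique positive vector with Ttot k̂ = T̂. Suppose Ψ is a map taking each positive vector k : F → ℝ to the positive vector Ψ k characterized by: for every f ∈ F, Ttot (Function.update k f (Ψ k f)) f = T̂ f (i.e. Ψ k f is the curvature obtained by adjusting circle f alone so that its total geodesic curvature equals T̂ f). Then for every initial positive vector k⁰ : F → ℝ, the iterates Ψ^[m] k⁰ converge pointwise to k̂ as m → ∞; consequently Ttot (Ψ^[m] k⁰) f → T̂ f for every f. (This is the convergence of Thurston's algorithm.) -/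
open Real Filter Finset

lemma arctan_key {y : ℝ} (hy : 0 < y) : y / (1 + y ^ 2) < Real.arctan y := by
  have h : StrictMonoOn (fun t : ℝ => Real.arctan t - t / (1 + t ^ 2)) (Set.Ici 0) := by
    apply strictMonoOn_of_deriv_pos (convex_Ici 0)
    · exact (Real.continuous_arctan.continuousOn).sub
        (continuousOn_id.div ((continuous_const.add (continuous_pow 2)).continuousOn) (fun t _ => by positivity))
    · intro t ht
      rw [interior_Ici] at ht
      have h1 : (1 + t ^ 2) ≠ 0 := by positivity
      have hd : HasDerivAt (fun t : ℝ => Real.arctan t - t / (1 + t ^ 2))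
          (1 / (1 + t ^ 2) - ((1 * (1 + t ^ 2) - t * (2 * t)) / (1 + t ^ 2) ^ 2)) t := by
        exact (Real.hasDerivAt_arctan t).sub
          ((hasDerivAt_id t).div (by simpa using (hasDerivAt_pow 2 t).const_add 1) h1)
      rw [hd.deriv]
      have : 1 / (1 + t ^ 2) - ((1 * (1 + t ^ 2) - t * (2 * t)) / (1 + t ^ 2) ^ 2)
          = 2 * t ^ 2 / (1 + t ^ 2) ^ 2 := by field_simp; ring
      rw [this]
      have ht' : t ≠ 0 := ne_of_gt ht
      positivity
  have := h (Set.self_mem_Ici) (Set.mem_Ici.mpr hy.le) hy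
  simpa [Real.arctan_zero] using this

lemma g_strictMono {K : ℝ} (hK : 0 < K) :
    StrictMonoOn (fun s : ℝ => s * Real.arctan (K / s)) (Set.Ioi 0) := by
  apply strictMonoOn_of_deriv_pos (convex_Ioi 0)
  · exact continuousOn_id.mul (Real.continuous_arctan.comp_continuousOn
      (continuousOn_const.div continuousOn_id (fun s hs => ne_of_gt hs)))
  · intro s hs
    rw [interior_Ioi] at hs
    have hs' : (0:ℝ) < s := hs
    have hs0 : s ≠ 0 := ne_of_gt hs'
    have hd : HasDerivAt (fun s : ℝ => s * Real.arctan (K / s))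
        (1 * Real.arctan (K / s) + s * (1 / (1 + (K / s) ^ 2) * (-(K / s ^ 2)))) s := by
      have harg : HasDerivAt (fun s : ℝ => K / s) (-(K / s ^ 2)) s := by
        simpa [div_eq_mul_inv, sq] using (hasDerivAt_inv hs0).const_mul K
      exact (hasDerivAt_id s).mul ((Real.hasDerivAt_arctan (K / s)).comp s harg)
    rw [hd.deriv]
    have key := arctan_key (y := K / s) (by positivity)
    have heq : s * (1 / (1 + (K / s) ^ 2) * (-(K / s ^ 2))) = -((K / s) / (1 + (K / s) ^ 2)) := by
      have : (1 + (K / s) ^ 2) ≠ 0 := by positivity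
      field_simp
    rw [heq]
    linarith

lemma sqrt_sq_add_one_pos (a : ℝ) : 0 < Real.sqrt (a ^ 2 + 1) :=
  Real.sqrt_pos.mpr (by positivity)

lemma s_lt_s {a a' : ℝ} (ha : 0 < a) (h : a < a') :
    a / Real.sqrt (a ^ 2 + 1) < a' / Real.sqrt (a' ^ 2 + 1) := by
  have h1 := sqrt_sq_add_one_pos a
  have h2 := sqrt_sq_add_one_pos a'
  rw [div_lt_div_iff₀ h1 h2]
  have hsq : (a * Real.sqrt (a' ^ 2 + 1)) ^ 2 < (a' * Real.sqrt (a ^ 2 + 1)) ^ 2 := by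
    rw [mul_pow, mul_pow, Real.sq_sqrt (by positivity), Real.sq_sqrt (by positivity)]
    nlinarith
  have ha' : 0 < a' := ha.trans h
  exact lt_of_pow_lt_pow_left₀ 2 (by positivity) hsq

/-- The representation `T a b θ = 2 * (s * arctan (K / s))`. -/
lemma T_eq {a b θ : ℝ} (ha : 0 < a) (hd : 0 < b + a * Real.cos θ) :
    T a b θ = 2 * ((a / Real.sqrt (a ^ 2 + 1)) *
      Real.arctan ((a * Real.sin θ / (b + a * Real.cos θ)) / (a / Real.sqrt (a ^ 2 + 1)))) := by
  have h1 := sqrt_sq_add_one_pos a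
  have harg : (a * Real.sin θ / (b + a * Real.cos θ)) / (a / Real.sqrt (a ^ 2 + 1))
      = Real.sin θ * Real.sqrt (a ^ 2 + 1) / (b + a * Real.cos θ) := by
    field_simp
  rw [T, harg]
  ring

section Tprops
variable {a a' b b' c θ : ℝ}

lemma theta_facts (h1 : 0 < θ) (h2 : θ ≤ Real.pi / 2) :
    0 < Real.sin θ ∧ 0 ≤ Real.cos θ :=
  ⟨Real.sin_pos_of_pos_of_lt_pi h1 (lt_of_le_of_lt h2 (by linarith [Real.pi_pos])),
   Real.cos_nonneg_of_mem_Icc ⟨by linarith [Real.pi_pos], h2⟩⟩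

lemma denom_pos (ha : 0 < a) (hb : 0 < b) (hc : 0 ≤ Real.cos θ) :
    0 < b + a * Real.cos θ := by positivity

lemma T_pos (ha : 0 < a) (hb : 0 < b) (h1 : 0 < θ) (h2 : θ ≤ Real.pi / 2) :
    0 < T a b θ := by
  obtain ⟨hs, hc⟩ := theta_facts h1 h2
  have hd := denom_pos ha hb hc
  have h3 := sqrt_sq_add_one_pos a
  have harg : 0 < Real.sin θ * Real.sqrt (a ^ 2 + 1) / (b + a * Real.cos θ) := by positivity
  have harct : 0 < Real.arctan (Real.sin θ * Real.sqrt (a ^ 2 + 1) / (b + a * Real.cos θ)) := by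
    rw [← Real.arctan_zero]; exact Real.arctan_strictMono harg
  rw [T]
  positivity

/-- Strict monotonicity in the first argument. -/
lemma T_lt_T_left (ha : 0 < a) (haa : a < a') (hb : 0 < b)
    (h1 : 0 < θ) (h2 : θ ≤ Real.pi / 2) : T a b θ < T a' b θ := by
  obtain ⟨hsin, hcos⟩ := theta_facts h1 h2
  have ha' : 0 < a' := ha.trans haa
  have hd := denom_pos ha hb hcos
  have hd' := denom_pos ha' hb hcos
  rw [T_eq ha hd, T_eq ha' hd']
  set s := a / Real.sqrt (a ^ 2 + 1) with hs_def
  set s' := a' / Real.sqrt (a' ^ 2 + 1) with hs'_def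
  set K := a * Real.sin θ / (b + a * Real.cos θ) with hK_def
  set K' := a' * Real.sin θ / (b + a' * Real.cos θ) with hK'_def
  have hKpos : 0 < K := by positivity
  have hspos : 0 < s := by have := sqrt_sq_add_one_pos a; positivity
  have hs'pos : 0 < s' := by have := sqrt_sq_add_one_pos a'; positivity
  have hss : s < s' := s_lt_s ha haa
  have hKK : K ≤ K' := by
    rw [hK_def, hK'_def, div_le_div_iff₀ hd hd']
    nlinarith [mul_nonneg (mul_nonneg hb.le hsin.le) (sub_nonneg.mpr haa.le)]
  have step1 : s * Real.arctan (K / s) < s' * Real.arctan (K / s') :=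
    g_strictMono hKpos hspos hs'pos hss
  have step2 : s' * Real.arctan (K / s') ≤ s' * Real.arctan (K' / s') := by
    apply mul_le_mul_of_nonneg_left _ hs'pos.le
    exact Real.arctan_strictMono.monotone (by gcongr)
  linarith

end Tprops

section Tprops2
variable {a a' b b' c θ : ℝ}

/-- Antitonicity in the second argument. -/
lemma T_le_T_right (ha : 0 < a) (hb : 0 < b) (hbb : b ≤ b')
    (h1 : 0 < θ) (h2 : θ ≤ Real.pi / 2) : T a b' θ ≤ T a b θ := by
  obtain ⟨hsin, hcos⟩ := theta_facts h1 h2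
  have hb' : 0 < b' := hb.trans_le hbb
  have hd := denom_pos ha hb hcos
  have hd' := denom_pos ha hb' hcos
  have h3 := sqrt_sq_add_one_pos a
  rw [T, T]
  apply mul_le_mul_of_nonneg_left _ (by positivity)
  apply Real.arctan_strictMono.monotone
  apply div_le_div_of_nonneg_left (by positivity) hd
  linarith

/-- Monotonicity under scaling both arguments. -/
lemma T_le_T_scale (ha : 0 < a) (hb : 0 < b) (hc : 1 ≤ c)
    (h1 : 0 < θ) (h2 : θ ≤ Real.pi / 2) : T a b θ ≤ T (c * a) (c * b) θ := by
  obtain ⟨hsin, hcos⟩ := theta_facts h1 h2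
  have hc0 : 0 < c := lt_of_lt_of_le one_pos hc
  have hca : 0 < c * a := by positivity
  have hcb : 0 < c * b := by positivity
  have hd := denom_pos ha hb hcos
  have hd' := denom_pos hca hcb hcos
  rw [T_eq ha hd, T_eq hca hd']
  have hK : c * a * Real.sin θ / (c * b + c * a * Real.cos θ)
      = a * Real.sin θ / (b + a * Real.cos θ) := by
    rw [div_eq_div_iff hd'.ne' hd.ne']; ring
  rw [hK]
  rcases eq_or_lt_of_le hc with rfl | hc1
  · rw [one_mul]
  · have hss : a / Real.sqrt (a ^ 2 + 1) < c * a / Real.sqrt ((c * a) ^ 2 + 1) :=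
      s_lt_s ha (by nlinarith)
    have hKpos : 0 < a * Real.sin θ / (b + a * Real.cos θ) := by positivity
    have := g_strictMono hKpos (Set.mem_Ioi.mpr (by have := sqrt_sq_add_one_pos a; positivity))
      (Set.mem_Ioi.mpr (by have := sqrt_sq_add_one_pos (c*a); positivity)) hss
    dsimp only at this
    linarith

/-- Strict monotonicity under scaling. -/
lemma T_lt_T_scale (ha : 0 < a) (hb : 0 < b) (hc : 1 < c)
    (h1 : 0 < θ) (h2 : θ ≤ Real.pi / 2) : T a b θ < T (c * a) (c * b) θ := by
  obtain ⟨hsin, hcos⟩ := theta_facts h1 h2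
  have hc0 : 0 < c := lt_trans one_pos hc
  have hca : 0 < c * a := by positivity
  have hcb : 0 < c * b := by positivity
  have hd := denom_pos ha hb hcos
  have hd' := denom_pos hca hcb hcos
  rw [T_eq ha hd, T_eq hca hd']
  have hK : c * a * Real.sin θ / (c * b + c * a * Real.cos θ)
      = a * Real.sin θ / (b + a * Real.cos θ) := by
    rw [div_eq_div_iff hd'.ne' hd.ne']; ring
  rw [hK]
  have hss : a / Real.sqrt (a ^ 2 + 1) < c * a / Real.sqrt ((c * a) ^ 2 + 1) :=
    s_lt_s ha (by nlinarith)
  have hKpos : 0 < a * Real.sin θ / (b + a * Real.cos θ) := by positivity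
  have := g_strictMono hKpos (Set.mem_Ioi.mpr (by have := sqrt_sq_add_one_pos a; positivity))
    (Set.mem_Ioi.mpr (by have := sqrt_sq_add_one_pos (c*a); positivity)) hss
  dsimp only at this
  linarith

/-- Combined comparison: larger first argument, smaller second argument. -/
lemma T_le_T_both (ha : 0 < a) (haa : a ≤ a') (hb' : 0 < b') (hbb : b' ≤ b)
    (h1 : 0 < θ) (h2 : θ ≤ Real.pi / 2) : T a b θ ≤ T a' b' θ := by
  rcases eq_or_lt_of_le haa with rfl | hlt
  · exact T_le_T_right ha hb' hbb h1 h2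
  · exact (T_le_T_right ha hb' hbb h1 h2).trans (T_lt_T_left ha hlt hb' h1 h2).le

/-- Continuity of `T` along converging sequences with positive limit data. -/
lemma T_tendsto {am bm : ℕ → ℝ} {a b : ℝ}
    (hA : Filter.Tendsto am Filter.atTop (nhds a))
    (hB : Filter.Tendsto bm Filter.atTop (nhds b))
    (hd : 0 < b + a * Real.cos θ) :
    Filter.Tendsto (fun m => T (am m) (bm m) θ) Filter.atTop (nhds (T a b θ)) := by
  have h3 := (sqrt_sq_add_one_pos a).ne'
  have hsq : Filter.Tendsto (fun m => Real.sqrt (am m ^ 2 + 1)) Filter.atTop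
      (nhds (Real.sqrt (a ^ 2 + 1))) :=
    (Real.continuous_sqrt.tendsto _).comp (((hA.pow 2).add tendsto_const_nhds))
  have hden : Filter.Tendsto (fun m => bm m + am m * Real.cos θ) Filter.atTop
      (nhds (b + a * Real.cos θ)) := hB.add (hA.mul tendsto_const_nhds)
  exact ((tendsto_const_nhds.mul hA).div hsq h3).mul
    ((Real.continuous_arctan.tendsto _).comp
      ((tendsto_const_nhds.mul hsq).div hden hd.ne'))

end Tprops2

section Comb
variable {F E : Type*} [Fintype E] [DecidableEq F] (ε : E → F × F) (θ : E → ℝ)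

/-- helper: `T x x < T x' x'` for `0 < x < x'`. -/
lemma T_diag_lt {x x' t : ℝ} (hx : 0 < x) (hxx : x < x')
    (h1 : 0 < t) (h2 : t ≤ Real.pi / 2) : T x x t < T x' x' t := by
  have hx0 : x ≠ 0 := hx.ne'
  have h := T_lt_T_scale hx hx ((one_lt_div hx).mpr hxx) h1 h2
  rwa [div_mul_cancel₀ _ hx0] at h

lemma T_diag_le {x x' t : ℝ} (hx : 0 < x) (hxx : x ≤ x')
    (h1 : 0 < t) (h2 : t ≤ Real.pi / 2) : T x x t ≤ T x' x' t := by
  rcases eq_or_lt_of_le hxx with rfl | h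
  · exact le_refl _
  · exact (T_diag_lt hx h h1 h2).le

variable (hθ : ∀ e, 0 < θ e ∧ θ e ≤ Real.pi / 2)

include hθ

/-- Strict monotonicity of `x ↦ Ttot (update k f x) f`. -/
lemma Ttot_update_lt (f : F) {k : F → ℝ} (hk : ∀ g, 0 < k g)
    {x x' : ℝ} (hx : 0 < x) (hxx : x < x')
    (e0 : E) (he0 : (ε e0).1 = f ∨ (ε e0).2 = f) :
    Ttot ε θ (Function.update k f x) f < Ttot ε θ (Function.update k f x') f := by
  have key : ∀ e : E,
      ((if (ε e).1 = f then T (Function.update k f x f) (Function.update k f x (ε e).2) (θ e) else 0) +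
       (if (ε e).2 = f then T (Function.update k f x f) (Function.update k f x (ε e).1) (θ e) else 0) ≤
       (if (ε e).1 = f then T (Function.update k f x' f) (Function.update k f x' (ε e).2) (θ e) else 0) +
       (if (ε e).2 = f then T (Function.update k f x' f) (Function.update k f x' (ε e).1) (θ e) else 0)) ∧
      ((ε e).1 = f ∨ (ε e).2 = f →
       (if (ε e).1 = f then T (Function.update k f x f) (Function.update k f x (ε e).2) (θ e) else 0) +
       (if (ε e).2 = f then T (Function.update k f x f) (Function.update k f x (ε e).1) (θ e) else 0) <
       (if (ε e).1 = f then T (Function.update k f x' f) (Function.update k f x' (ε e).2) (θ e) else 0) +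
       (if (ε e).2 = f then T (Function.update k f x' f) (Function.update k f x' (ε e).1) (θ e) else 0)) := by
    intro e
    obtain ⟨ht1, ht2⟩ := hθ e
    by_cases h1 : (ε e).1 = f <;> by_cases h2 : (ε e).2 = f <;>
      simp only [h1, h2, if_true, if_false, Function.update_apply, if_pos rfl,
        Function.update_self, add_zero, zero_add, ite_true, ite_false]
    · exact ⟨add_le_add (T_diag_le hx hxx.le ht1 ht2) (T_diag_le hx hxx.le ht1 ht2),
        fun _ => add_lt_add (T_diag_lt hx hxx ht1 ht2) (T_diag_lt hx hxx ht1 ht2)⟩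
    · exact ⟨(T_lt_T_left hx hxx (hk _) ht1 ht2).le,
        fun _ => T_lt_T_left hx hxx (hk _) ht1 ht2⟩
    · exact ⟨(T_lt_T_left hx hxx (hk _) ht1 ht2).le,
        fun _ => T_lt_T_left hx hxx (hk _) ht1 ht2⟩
    · exact ⟨le_refl _, fun h => absurd h (by simp [h1, h2])⟩
  exact Finset.sum_lt_sum (fun e _ => (key e).1) ⟨e0, Finset.mem_univ _, (key e0).2 he0⟩

/-- Antitonicity of `Ttot (update k f x) f` in the off-`f` entries of `k`. -/
lemma Ttot_update_anti (f : F) {k k' : F → ℝ} (hk : ∀ g, 0 < k g)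
    (hkk : ∀ g, k g ≤ k' g) {x : ℝ} (hx : 0 < x) :
    Ttot ε θ (Function.update k' f x) f ≤ Ttot ε θ (Function.update k f x) f := by
  apply Finset.sum_le_sum
  intro e _
  obtain ⟨ht1, ht2⟩ := hθ e
  by_cases h1 : (ε e).1 = f <;> by_cases h2 : (ε e).2 = f <;>
    simp only [h1, h2, if_true, if_false, Function.update_apply, if_pos rfl,
      Function.update_self, add_zero, zero_add, ite_true, ite_false]
  · exact le_refl _
  · exact T_le_T_right hx (hk _) (hkk _) ht1 ht2
  · exact T_le_T_right hx (hk _) (hkk _) ht1 ht2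
  · exact le_refl _

/-- Monotonicity of `Ttot` under scaling, non-strict. -/
lemma Ttot_le_scale (f : F) {k : F → ℝ} (hk : ∀ g, 0 < k g) {c : ℝ} (hc : 1 ≤ c) :
    Ttot ε θ k f ≤ Ttot ε θ (fun g => c * k g) f := by
  apply Finset.sum_le_sum
  intro e _
  obtain ⟨ht1, ht2⟩ := hθ e
  by_cases h1 : (ε e).1 = f <;> by_cases h2 : (ε e).2 = f <;>
    simp only [h1, h2, if_true, if_false, add_zero, zero_add, ite_true, ite_false]
  · exact add_le_add (T_le_T_scale (hk _) (hk _) hc ht1 ht2)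
      (T_le_T_scale (hk _) (hk _) hc ht1 ht2)
  · exact T_le_T_scale (hk _) (hk _) hc ht1 ht2
  · exact T_le_T_scale (hk _) (hk _) hc ht1 ht2
  · exact le_refl _

/-- Strict monotonicity of `Ttot` under scaling. -/
lemma Ttot_lt_scale (f : F) {k : F → ℝ} (hk : ∀ g, 0 < k g) {c : ℝ} (hc : 1 < c)
    (e0 : E) (he0 : (ε e0).1 = f ∨ (ε e0).2 = f) :
    Ttot ε θ k f < Ttot ε θ (fun g => c * k g) f := by
  apply Finset.sum_lt_sum
  · intro e _
    obtain ⟨ht1, ht2⟩ := hθ e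
    by_cases h1 : (ε e).1 = f <;> by_cases h2 : (ε e).2 = f <;>
      simp only [h1, h2, if_true, if_false, add_zero, zero_add, ite_true, ite_false]
    · exact add_le_add (T_le_T_scale (hk _) (hk _) hc.le ht1 ht2)
        (T_le_T_scale (hk _) (hk _) hc.le ht1 ht2)
    · exact T_le_T_scale (hk _) (hk _) hc.le ht1 ht2
    · exact T_le_T_scale (hk _) (hk _) hc.le ht1 ht2
    · exact le_refl _
  · refine ⟨e0, Finset.mem_univ _, ?_⟩
    obtain ⟨ht1, ht2⟩ := hθ e0
    by_cases h1 : (ε e0).1 = f <;> by_cases h2 : (ε e0).2 = f <;>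
      simp only [h1, h2, if_true, if_false, add_zero, zero_add, ite_true, ite_false]
    · exact add_lt_add (T_lt_T_scale (hk _) (hk _) hc ht1 ht2)
        (T_lt_T_scale (hk _) (hk _) hc ht1 ht2)
    · exact T_lt_T_scale (hk _) (hk _) hc ht1 ht2
    · exact T_lt_T_scale (hk _) (hk _) hc ht1 ht2
    · exact absurd he0 (by simp [h1, h2])

/-- Continuity of `Ttot` along pointwise-converging sequences with positive limit. -/
lemma Ttot_tendsto (f : F) {vm : ℕ → F → ℝ} {V : F → ℝ}
    (hv : ∀ g, Filter.Tendsto (fun m => vm m g) Filter.atTop (nhds (V g)))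
    (hV : ∀ g, 0 < V g) :
    Filter.Tendsto (fun m => Ttot ε θ (vm m) f) Filter.atTop (nhds (Ttot ε θ V f)) := by
  apply tendsto_finset_sum
  intro e _
  obtain ⟨ht1, ht2⟩ := hθ e
  have hcos := (theta_facts ht1 ht2).2
  have hd : ∀ g : F, 0 < V g + V f * Real.cos (θ e) := fun g => by
    have := hV g; have := hV f; positivity
  apply Filter.Tendsto.add
  · by_cases h1 : (ε e).1 = f <;> simp only [h1, ite_true, ite_false]
    · exact T_tendsto (hv f) (hv (ε e).2) (hd _)
    · exact tendsto_const_nhds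
  · by_cases h2 : (ε e).2 = f <;> simp only [h2, ite_true, ite_false]
    · exact T_tendsto (hv f) (hv (ε e).1) (hd _)
    · exact tendsto_const_nhds

end Comb

theorem stmt_17 {F E : Type*} [Fintype F] [Fintype E] [Nonempty F] [DecidableEq F]
    (ε : E → F × F) (θ : E → ℝ) (hθ : ∀ e, 0 < θ e ∧ θ e ≤ Real.pi / 2)
    (hadj : ∀ f : F, ∃ e : E, (ε e).1 = f ∨ (ε e).2 = f)
    (That : F → ℝ) (hpos : ∀ f, 0 < That f)
    (hT : ∀ F' : Finset F, F'.Nonempty →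
      ∑ f ∈ F', That f <
        ∑ e ∈ Finset.univ.filter (fun e => (ε e).1 ∈ F' ∨ (ε e).2 ∈ F'),
          2 * θ e)
    (khat : F → ℝ) (hkhat : ∀ f, 0 < khat f)
    (hkhatT : ∀ f, Ttot ε θ khat f = That f)
    (Ψ : (F → ℝ) → (F → ℝ))
    (hΨ : ∀ k : F → ℝ, (∀ f, 0 < k f) →
      ∀ f, 0 < Ψ k f ∧ Ttot ε θ (Function.update k f (Ψ k f)) f = That f)
    (k0 : F → ℝ) (hk0 : ∀ f, 0 < k0 f) :
    (∀ f, Filter.Tendsto (fun m => Ψ^[m] k0 f) Filter.atTop (nhds (khat f))) ∧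
    (∀ f, Filter.Tendsto (fun m => Ttot ε θ (Ψ^[m] k0) f) Filter.atTop
      (nhds (That f))) := by
  classical
  have hPsiPos : ∀ k, (∀ f, 0 < k f) → ∀ f, 0 < Ψ k f := fun k hk f => (hΨ k hk f).1
  have hiterpos : ∀ (k : F → ℝ), (∀ f, 0 < k f) → ∀ m f, 0 < Ψ^[m] k f := by
    intro k hk m
    induction m with
    | zero => simpa using hk
    | succ n ih =>
      intro f
      rw [Function.iterate_succ_apply']
      exact hPsiPos _ ih f
  -- monotonicity of Ψ
  have hmono : ∀ k k', (∀ f, 0 < k f) → (∀ f, 0 < k' f) → (∀ f, k f ≤ k' f) →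
      ∀ f, Ψ k f ≤ Ψ k' f := by
    intro k k' hk hk' hkk f
    by_contra hcon
    push_neg at hcon
    obtain ⟨e0, he0⟩ := hadj f
    have h1 : Ttot ε θ (Function.update k f (Ψ k' f)) f
        < Ttot ε θ (Function.update k f (Ψ k f)) f :=
      Ttot_update_lt ε θ hθ f hk (hPsiPos k' hk' f) hcon e0 he0
    have h2 : Ttot ε θ (Function.update k' f (Ψ k' f)) f
        ≤ Ttot ε θ (Function.update k f (Ψ k' f)) f :=
      Ttot_update_anti ε θ hθ f hk hkk (hPsiPos k' hk' f)
    rw [(hΨ k hk f).2] at h1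
    rw [(hΨ k' hk' f).2] at h2
    linarith
  -- fixed point
  have hfix : ∀ f, Ψ khat f = khat f := by
    intro f
    by_contra hcon
    obtain ⟨e0, he0⟩ := hadj f
    have hx := hPsiPos khat hkhat f
    have hTu : Ttot ε θ (Function.update khat f (khat f)) f = That f := by
      rw [Function.update_eq_self]; exact hkhatT f
    rcases lt_or_gt_of_ne hcon with h | h
    · have := Ttot_update_lt ε θ hθ f hkhat hx h e0 he0
      rw [(hΨ khat hkhat f).2, hTu] at this
      exact absurd this (lt_irrefl _)
    · have := Ttot_update_lt ε θ hθ f hkhat (hkhat f) h e0 he0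
      rw [(hΨ khat hkhat f).2, hTu] at this
      exact absurd this (lt_irrefl _)
  -- upper barrier: Ψ (c • khat) ≤ c • khat for c ≥ 1
  have hD4 : ∀ c : ℝ, 1 ≤ c → ∀ f, Ψ (fun g => c * khat g) f ≤ c * khat f := by
    intro c hc f
    have hk : ∀ g, 0 < c * khat g := fun g => by
      have := hkhat g; nlinarith
    by_contra hcon
    push_neg at hcon
    obtain ⟨e0, he0⟩ := hadj f
    have h1 := Ttot_update_lt ε θ hθ f hk (hk f) hcon e0 he0
    rw [Function.update_eq_self, (hΨ _ hk f).2] at h1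
    have h2 : Ttot ε θ khat f ≤ Ttot ε θ (fun g => c * khat g) f :=
      Ttot_le_scale ε θ hθ f hkhat hc
    rw [hkhatT f] at h2
    linarith
  -- lower barrier: khat / c ≤ Ψ (khat / c) for c ≥ 1
  have hD4' : ∀ c : ℝ, 1 ≤ c → ∀ f, khat f / c ≤ Ψ (fun g => khat g / c) f := by
    intro c hc f
    have hc0 : (0:ℝ) < c := lt_of_lt_of_le one_pos hc
    have hk : ∀ g, 0 < khat g / c := fun g => div_pos (hkhat g) hc0
    by_contra hcon
    push_neg at hcon
    obtain ⟨e0, he0⟩ := hadj f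
    have h1 := Ttot_update_lt ε θ hθ f hk (hPsiPos _ hk f) hcon e0 he0
    rw [Function.update_eq_self, (hΨ _ hk f).2] at h1
    have hscale : (fun g => c * (khat g / c)) = khat := by
      funext g; field_simp
    have h2 : Ttot ε θ (fun g => khat g / c) f ≤ Ttot ε θ khat f := by
      have := Ttot_le_scale ε θ hθ f hk hc
      rwa [hscale] at this
    rw [hkhatT f] at h2
    linarith
  -- uniqueness of positive solutions of Ttot k = That
  have hUniq2 : ∀ u v : F → ℝ, (∀ f, 0 < u f) → (∀ f, 0 < v f) →
      (∀ f, Ttot ε θ u f = That f) → (∀ f, Ttot ε θ v f = That f) →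
      ∀ f, u f ≤ v f := by
    intro u v hu hv hTu hTv
    have hne : (Finset.univ : Finset F).Nonempty := Finset.univ_nonempty
    set c := Finset.univ.sup' hne (fun g => u g / v g) with hc_def
    have hle : ∀ g, u g / v g ≤ c := fun g => by
      rw [hc_def]; exact Finset.le_sup' (fun g : F => u g / v g) (Finset.mem_univ g)
    by_cases hc : c ≤ 1
    · intro f
      have h1 := hle f
      rw [div_le_iff₀ (hv f)] at h1
      have := hv f
      nlinarith
    · push_neg at hc
      exfalso
      obtain ⟨f0, _, hf0⟩ := Finset.exists_mem_eq_sup' hne (fun g : F => u g / v g)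
      have hcv : ∀ g, u g ≤ c * v g := fun g => by
        have := hle g
        rwa [div_le_iff₀ (hv g)] at this
      have hcf : u f0 = c * v f0 := by
        have h : u f0 / v f0 = c := by rw [hc_def, hf0]
        rw [div_eq_iff (hv f0).ne'] at h
        linarith
      obtain ⟨e0, he0⟩ := hadj f0
      have h1 : Ttot ε θ v f0 < Ttot ε θ (fun g => c * v g) f0 :=
        Ttot_lt_scale ε θ hθ f0 hv hc e0 he0
      have h2 : Ttot ε θ (fun g => c * v g) f0 ≤ Ttot ε θ u f0 := by
        have ha := Ttot_update_anti ε θ hθ f0 hu hcv (hu f0)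
        rw [Function.update_eq_self] at ha
        have hupd : Function.update (fun g => c * v g) f0 (u f0)
            = fun g => c * v g := by
          rw [hcf]; exact Function.update_eq_self _ _
        rwa [hupd] at ha
      rw [hTu f0, hTv f0] at *
      linarith
  -- choice of the constant c
  have hne : (Finset.univ : Finset F).Nonempty := Finset.univ_nonempty
  set c : ℝ := max 1 (Finset.univ.sup' hne (fun f => max (khat f / k0 f) (k0 f / khat f)))
    with hc_def
  have hc1 : (1:ℝ) ≤ c := le_max_left _ _
  have hc0 : (0:ℝ) < c := lt_of_lt_of_le one_pos hc1
  have hcsup : ∀ f, max (khat f / k0 f) (k0 f / khat f) ≤ c := fun f => by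
    exact (Finset.le_sup' (fun f : F => max (khat f / k0 f) (k0 f / khat f))
      (Finset.mem_univ f)).trans (hc_def ▸ le_max_right _ _)
  have hup : ∀ f, k0 f ≤ c * khat f := fun f => by
    have := (le_max_right (khat f / k0 f) (k0 f / khat f)).trans (hcsup f)
    rwa [div_le_iff₀ (hkhat f)] at this
  have hlo : ∀ f, khat f / c ≤ k0 f := fun f => by
    have := (le_max_left (khat f / k0 f) (k0 f / khat f)).trans (hcsup f)
    rw [div_le_iff₀ (hk0 f)] at this
    rw [div_le_iff₀ hc0]
    nlinarith [hk0 f]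
  set ku : F → ℝ := fun g => c * khat g with hku_def
  set kl : F → ℝ := fun g => khat g / c with hkl_def
  have hkupos : ∀ g, 0 < ku g := fun g => by have := hkhat g; positivity
  have hklpos : ∀ g, 0 < kl g := fun g => by have := hkhat g; positivity
  set u : ℕ → F → ℝ := fun m => Ψ^[m] ku with hu_def
  set l : ℕ → F → ℝ := fun m => Ψ^[m] kl with hl_def
  have hupos : ∀ m g, 0 < u m g := fun m => hiterpos ku hkupos m
  have hlpos : ∀ m g, 0 < l m g := fun m => hiterpos kl hklpos m
  have hwpos : ∀ m g, 0 < Ψ^[m] k0 g := fun m => hiterpos k0 hk0 m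
  have hsucc_u : ∀ m, u (m+1) = Ψ (u m) := fun m => Function.iterate_succ_apply' Ψ m ku
  have hsucc_l : ∀ m, l (m+1) = Ψ (l m) := fun m => Function.iterate_succ_apply' Ψ m kl
  have hsucc_w : ∀ m, Ψ^[m+1] k0 = Ψ (Ψ^[m] k0) := fun m => Function.iterate_succ_apply' Ψ m k0
  -- u decreasing, bounded below by khat; l increasing, bounded above by khat
  have hdec : ∀ m g, u (m+1) g ≤ u m g := by
    intro m
    induction m with
    | zero =>
      intro g
      rw [hsucc_u 0]
      exact hD4 c hc1 g
    | succ n ih =>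
      intro g
      rw [hsucc_u (n+1)]
      calc Ψ (u (n+1)) g ≤ Ψ (u n) g := hmono _ _ (hupos (n+1)) (hupos n) ih g
        _ = u (n+1) g := by rw [hsucc_u n]
  have hlb : ∀ m g, khat g ≤ u m g := by
    intro m
    induction m with
    | zero =>
      intro g
      show khat g ≤ c * khat g
      nlinarith [hkhat g]
    | succ n ih =>
      intro g
      rw [hsucc_u n]
      calc khat g = Ψ khat g := (hfix g).symm
        _ ≤ Ψ (u n) g := hmono khat (u n) hkhat (hupos n) ih g
  have hinc : ∀ m g, l m g ≤ l (m+1) g := by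
    intro m
    induction m with
    | zero =>
      intro g
      rw [hsucc_l 0]
      exact hD4' c hc1 g
    | succ n ih =>
      intro g
      calc l (n+1) g = Ψ (l n) g := by rw [hsucc_l n]
        _ ≤ Ψ (l (n+1)) g := hmono _ _ (hlpos n) (hlpos (n+1)) ih g
        _ = l (n+1+1) g := by rw [hsucc_l (n+1)]
  have hub : ∀ m g, l m g ≤ khat g := by
    intro m
    induction m with
    | zero =>
      intro g
      show khat g / c ≤ khat g
      exact div_le_self (hkhat g).le hc1
    | succ n ih =>
      intro g
      rw [hsucc_l n]
      calc Ψ (l n) g ≤ Ψ khat g := hmono _ _ (hlpos n) hkhat ih g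
        _ = khat g := hfix g
  have hsq : ∀ m g, l m g ≤ Ψ^[m] k0 g ∧ Ψ^[m] k0 g ≤ u m g := by
    intro m
    induction m with
    | zero =>
      intro g
      exact ⟨hlo g, hup g⟩
    | succ n ih =>
      intro g
      rw [hsucc_l n, hsucc_u n, hsucc_w n]
      exact ⟨hmono _ _ (hlpos n) (hwpos n) (fun g' => (ih g').1) g,
        hmono _ _ (hwpos n) (hupos n) (fun g' => (ih g').2) g⟩
  -- limits of the barrier sequences
  set U : F → ℝ := fun g => ⨅ m, u m g with hU_def
  set L : F → ℝ := fun g => ⨆ m, l m g with hL_def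
  have hUbdd : ∀ g, BddBelow (Set.range fun m => u m g) := fun g =>
    ⟨khat g, by rintro x ⟨m, rfl⟩; exact hlb m g⟩
  have hLbdd : ∀ g, BddAbove (Set.range fun m => l m g) := fun g =>
    ⟨khat g, by rintro x ⟨m, rfl⟩; exact hub m g⟩
  have hUt : ∀ g, Filter.Tendsto (fun m => u m g) Filter.atTop (nhds (U g)) := fun g =>
    tendsto_atTop_ciInf (antitone_nat_of_succ_le fun m => hdec m g) (hUbdd g)
  have hLt : ∀ g, Filter.Tendsto (fun m => l m g) Filter.atTop (nhds (L g)) := fun g =>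
    tendsto_atTop_ciSup (monotone_nat_of_le_succ fun m => hinc m g) (hLbdd g)
  have hUge : ∀ g, khat g ≤ U g := fun g => le_ciInf fun m => hlb m g
  have hUpos : ∀ g, 0 < U g := fun g => lt_of_lt_of_le (hkhat g) (hUge g)
  have hLle : ∀ g, L g ≤ khat g := fun g => ciSup_le fun m => hub m g
  have hLpos : ∀ g, 0 < L g := fun g =>
    lt_of_lt_of_le (hklpos g) (le_ciSup (hLbdd g) 0)
  -- the limits solve the equation
  have hUfix : ∀ f, Ttot ε θ U f = That f := by
    intro f
    have heq : ∀ m : ℕ, Ttot ε θ (Function.update (u m) f (u (m+1) f)) f = That f := by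
      intro m
      rw [hsucc_u m]
      exact (hΨ (u m) (hupos m) f).2
    have hv : ∀ g, Filter.Tendsto (fun m => Function.update (u m) f (u (m+1) f) g)
        Filter.atTop (nhds (U g)) := by
      intro g
      by_cases hg : g = f
      · subst hg
        simp only [Function.update_self]
        exact (hUt g).comp (tendsto_add_atTop_nat 1)
      · simp only [Function.update_of_ne hg]
        exact hUt g
    have h1 := Ttot_tendsto ε θ hθ f hv hUpos
    have h2 : Filter.Tendsto (fun m => Ttot ε θ (Function.update (u m) f (u (m+1) f)) f)
        Filter.atTop (nhds (That f)) := by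
      simp only [heq]
      exact tendsto_const_nhds
    exact tendsto_nhds_unique h1 h2
  have hLfix : ∀ f, Ttot ε θ L f = That f := by
    intro f
    have heq : ∀ m : ℕ, Ttot ε θ (Function.update (l m) f (l (m+1) f)) f = That f := by
      intro m
      rw [hsucc_l m]
      exact (hΨ (l m) (hlpos m) f).2
    have hv : ∀ g, Filter.Tendsto (fun m => Function.update (l m) f (l (m+1) f) g)
        Filter.atTop (nhds (L g)) := by
      intro g
      by_cases hg : g = f
      · subst hg
        simp only [Function.update_self]
        exact (hLt g).comp (tendsto_add_atTop_nat 1)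
      · simp only [Function.update_of_ne hg]
        exact hLt g
    have h1 := Ttot_tendsto ε θ hθ f hv hLpos
    have h2 : Filter.Tendsto (fun m => Ttot ε θ (Function.update (l m) f (l (m+1) f)) f)
        Filter.atTop (nhds (That f)) := by
      simp only [heq]
      exact tendsto_const_nhds
    exact tendsto_nhds_unique h1 h2
  -- uniqueness forces both limits to be khat
  have hU_eq : ∀ g, U g = khat g := fun g =>
    le_antisymm (hUniq2 U khat hUpos hkhat hUfix hkhatT g) (hUge g)
  have hL_eq : ∀ g, L g = khat g := fun g =>
    le_antisymm (hLle g) (hUniq2 khat L hkhat hLpos hkhatT hLfix g)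
  -- squeeze
  have hmain : ∀ f, Filter.Tendsto (fun m => Ψ^[m] k0 f) Filter.atTop (nhds (khat f)) := by
    intro f
    have h1 : Filter.Tendsto (fun m => l m f) Filter.atTop (nhds (khat f)) := by
      rw [← hL_eq f]; exact hLt f
    have h2 : Filter.Tendsto (fun m => u m f) Filter.atTop (nhds (khat f)) := by
      rw [← hU_eq f]; exact hUt f
    exact tendsto_of_tendsto_of_tendsto_of_le_of_le h1 h2
      (fun m => (hsq m f).1) (fun m => (hsq m f).2)
  refine ⟨hmain, fun f => ?_⟩
  have h := Ttot_tendsto ε θ hθ f (fun g => hmain g) hkhat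
  rwa [hkhatT f] at h
end

section
/- With the weighted-graph setup below, let T̂ : F → ℝ with T̂ f > 0 for all f and T̂ ∈ 𝒯, and let Ψ be the Thurston adjustment map characterized by: for every positive vector k and every f ∈ F, Ψ k f > 0 and Ttot (Function.update k f (Ψ k f)) f = T̂ f. If k : F → ℝ is a positive vector with Ttot k f ≤ T̂ f for every f, then Ψ k f ≥ k f for every f and Ttot (Ψ k) f ≤ T̂ f for every f. (Hence Ψ preserves the subpattern set 𝒦₁ and the algorithm started below the target produces pointwise nondecreasing geodesic curvatures with total curvatures staying ≤ T̂.) -/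
open Real Filter Finset

theorem arctan_lb {x : ℝ} (hx : 0 < x) : x / (1 + x^2) < Real.arctan x := by
  have ht0 : 0 < Real.arctan x := by
    simpa using Real.arctan_strictMono hx
  have hs : Real.sin (Real.arctan x) = x / Real.sqrt (1 + x^2) := Real.sin_arctan x
  have hc : Real.cos (Real.arctan x) = 1 / Real.sqrt (1 + x^2) := Real.cos_arctan x
  have h1 : Real.sin (Real.arctan x) * Real.cos (Real.arctan x) = x / (1+x^2) := by
    rw [hs, hc, div_mul_div_comm, mul_one, Real.mul_self_sqrt (by positivity)]
  have hslt : Real.sin (Real.arctan x) < Real.arctan x := Real.sin_lt ht0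
  have hc1 : Real.cos (Real.arctan x) ≤ 1 := Real.cos_le_one _
  have hspos : 0 < Real.sin (Real.arctan x) := by rw [hs]; positivity
  nlinarith

lemma hasDeriv_u (a : ℝ) : HasDerivAt (fun x : ℝ => Real.sqrt (x^2+1)) (a / Real.sqrt (a^2+1)) a := by
  have h : HasDerivAt (fun x : ℝ => x^2+1) (2*a) a := by
    simpa using (hasDerivAt_pow 2 a).add_const 1
  have h2 := h.sqrt (by positivity)
  convert h2 using 1
  have : Real.sqrt (a^2+1) ≠ 0 := by positivity
  field_simp

lemma hasDeriv_p (a : ℝ) : HasDerivAt (fun x : ℝ => 2*x/Real.sqrt (x^2+1)) (2/(Real.sqrt (a^2+1))^3) a := by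
  have hu : Real.sqrt (a^2+1) ^ 2 = a^2+1 := Real.sq_sqrt (by positivity)
  have hu0 : (0:ℝ) < Real.sqrt (a^2+1) := by positivity
  have hn : HasDerivAt (fun x : ℝ => 2*x) 2 a := by simpa using (hasDerivAt_id a).const_mul 2
  have h := hn.div (hasDeriv_u a) hu0.ne'
  refine h.congr_deriv (Eq.symm ?_)
  rw [div_eq_div_iff (by positivity) (by positivity)]
  field_simp
  linear_combination -hu

lemma hasDeriv_q (b s c a : ℝ) (hd : b + a*c ≠ 0) :
    HasDerivAt (fun x : ℝ => s * Real.sqrt (x^2+1) / (b + x*c))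
      (s*(a*b-c)/(Real.sqrt (a^2+1)*(b+a*c)^2)) a := by
  have hu : Real.sqrt (a^2+1) ^ 2 = a^2+1 := Real.sq_sqrt (by positivity)
  have hu0 : (0:ℝ) < Real.sqrt (a^2+1) := by positivity
  have hn : HasDerivAt (fun x : ℝ => s * Real.sqrt (x^2+1)) (s * (a / Real.sqrt (a^2+1))) a :=
    (hasDeriv_u a).const_mul s
  have hden : HasDerivAt (fun x : ℝ => b + x*c) c a := by
    simpa using ((hasDerivAt_id a).mul_const c).const_add b
  have h := hn.div hden hd
  refine h.congr_deriv (Eq.symm ?_)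
  rw [div_eq_div_iff (by positivity) (by positivity)]
  have hu0' : Real.sqrt (a^2+1) ≠ 0 := hu0.ne'
  field_simp
  linear_combination (s*c) * hu

lemma hasDeriv_g (b s c a : ℝ) (hd : 0 < b + a*c) :
    HasDerivAt (fun x : ℝ => Real.arctan (s * Real.sqrt (x^2+1) / (b + x*c)))
      (s*(a*b-c)/(Real.sqrt (a^2+1)*((b+a*c)^2 + s^2*(a^2+1)))) a := by
  have hu : Real.sqrt (a^2+1) ^ 2 = a^2+1 := Real.sq_sqrt (by positivity)
  have hu0 : (0:ℝ) < Real.sqrt (a^2+1) := by positivity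
  have h := (Real.hasDerivAt_arctan (s * Real.sqrt (a^2+1) / (b + a*c))).comp a
    (hasDeriv_q b s c a hd.ne')
  refine h.congr_deriv (Eq.symm ?_)
  set u := Real.sqrt (a^2+1) with hudef
  rw [← hu]
  have h1 : u ≠ 0 := hu0.ne'
  have h2 : b + a*c ≠ 0 := hd.ne'
  have h3 : (b+a*c)^2 + s^2*u^2 ≠ 0 := by positivity
  field_simp

lemma hasDeriv_T (b s c a : ℝ) (hd : 0 < b + a*c) :
    HasDerivAt (fun x : ℝ => 2*x/Real.sqrt (x^2+1) * Real.arctan (s * Real.sqrt (x^2+1) / (b + x*c)))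
      (2/(Real.sqrt (a^2+1))^3 * Real.arctan (s * Real.sqrt (a^2+1) / (b + a*c))
        + (2*a/Real.sqrt (a^2+1)) * (s*(a*b-c)/(Real.sqrt (a^2+1)*((b+a*c)^2 + s^2*(a^2+1))))) a :=
  (hasDeriv_p a).mul (hasDeriv_g b s c a hd)

lemma deriv_T_pos (b s c a : ℝ) (hb : 0 < b) (ha : 0 < a) (hs : 0 < s) (hc : 0 ≤ c) :
    0 < 2/(Real.sqrt (a^2+1))^3 * Real.arctan (s * Real.sqrt (a^2+1) / (b + a*c))
        + (2*a/Real.sqrt (a^2+1)) * (s*(a*b-c)/(Real.sqrt (a^2+1)*((b+a*c)^2 + s^2*(a^2+1)))) := by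
  set u := Real.sqrt (a^2+1) with hudef
  have hu : u ^ 2 = a^2+1 := Real.sq_sqrt (by positivity)
  have hu0 : (0:ℝ) < u := Real.sqrt_pos.2 (by positivity)
  have hd : 0 < b + a*c := by positivity
  set g := Real.arctan (s * u / (b + a*c)) with hgdef
  set D := (b+a*c)^2 + s^2*(a^2+1) with hDdef
  have hD : 0 < D := by positivity
  have hq : 0 < s * u / (b + a*c) := by positivity
  have key := arctan_lb hq
  have key2 : s * u * (b + a*c) < g * D := by
    have heq : (s*u/(b+a*c)) / (1 + (s*u/(b+a*c))^2) = s*u*(b+a*c)/D := by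
      rw [hDdef, ← hu]
      field_simp
    rw [heq] at key
    calc s * u * (b + a*c) = s*u*(b+a*c)/D * D := by field_simp
    _ < g * D := by exact mul_lt_mul_of_pos_right key hD
  have heq2 : 2/u^3 * g + (2*a/u) * (s*(a*b-c)/(u*D))
      = (2*g*D + 2*a*s*(a*b-c)*u)/(u^3*D) := by
    field_simp
  rw [heq2]
  apply div_pos _ (by positivity)
  nlinarith [mul_pos (mul_pos hs hu0) hb, hu, mul_pos hs hu0]


lemma T_strictMonoOn_left {b θ : ℝ} (hb : 0 < b) (hθ1 : 0 < θ) (hθ2 : θ ≤ Real.pi/2) :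
    StrictMonoOn (fun a => T a b θ) (Set.Ioi (0:ℝ)) := by
  have hs : 0 < Real.sin θ := Real.sin_pos_of_pos_of_lt_pi hθ1 (lt_of_le_of_lt hθ2 (by linarith [Real.pi_pos]))
  have hc : 0 ≤ Real.cos θ := Real.cos_nonneg_of_mem_Icc ⟨by linarith [Real.pi_pos], hθ2⟩
  apply strictMonoOn_of_deriv_pos (convex_Ioi 0)
  · intro x hx
    have hx : (0:ℝ) < x := hx
    have hd : 0 < b + x * Real.cos θ := by positivity
    exact ((hasDeriv_T b (Real.sin θ) (Real.cos θ) x hd).differentiableAt.continuousAt).continuousWithinAt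
  · intro x hx
    rw [interior_Ioi] at hx
    have hx : (0:ℝ) < x := hx
    have hd : 0 < b + x * Real.cos θ := by positivity
    have := (hasDeriv_T b (Real.sin θ) (Real.cos θ) x hd).deriv
    unfold T
    rw [this]
    exact deriv_T_pos b (Real.sin θ) (Real.cos θ) x hb hx hs hc

lemma hasDeriv_Tdiag (s c a : ℝ) (ha : 0 < a) (hs : 0 < s) (hc : 0 ≤ c) :
    HasDerivAt (fun x : ℝ => 2*x/Real.sqrt (x^2+1) * Real.arctan (s * Real.sqrt (x^2+1) / (x + x*c)))
      (2/(Real.sqrt (a^2+1))^3 * Real.arctan (s * Real.sqrt (a^2+1) / (0 + a*(1+c)))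
        + (2*a/Real.sqrt (a^2+1)) * (s*(a*0-(1+c))/(Real.sqrt (a^2+1)*((0+a*(1+c))^2 + s^2*(a^2+1))))) a := by
  have hd : (0:ℝ) < 0 + a*(1+c) := by nlinarith
  have h := (hasDeriv_p a).mul (hasDeriv_g 0 s (1+c) a hd)
  have hfe : (fun x : ℝ => 2*x/Real.sqrt (x^2+1) * Real.arctan (s * Real.sqrt (x^2+1) / (0 + x*(1+c))))
      = (fun x : ℝ => 2*x/Real.sqrt (x^2+1) * Real.arctan (s * Real.sqrt (x^2+1) / (x + x*c))) := by
    funext x; ring_nf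
  rw [← hfe]
  exact h

lemma deriv_Tdiag_pos (s c a : ℝ) (ha : 0 < a) (hs : 0 < s) (hc : 0 ≤ c) :
    0 < 2/(Real.sqrt (a^2+1))^3 * Real.arctan (s * Real.sqrt (a^2+1) / (0 + a*(1+c)))
        + (2*a/Real.sqrt (a^2+1)) * (s*(a*0-(1+c))/(Real.sqrt (a^2+1)*((0+a*(1+c))^2 + s^2*(a^2+1)))) := by
  set u := Real.sqrt (a^2+1) with hudef
  have hu : u ^ 2 = a^2+1 := Real.sq_sqrt (by positivity)
  have hu0 : (0:ℝ) < u := Real.sqrt_pos.2 (by positivity)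
  have hd : (0:ℝ) < 0 + a*(1+c) := by nlinarith
  set g := Real.arctan (s * u / (0 + a*(1+c))) with hgdef
  set D := (0+a*(1+c))^2 + s^2*(a^2+1) with hDdef
  have hD : 0 < D := by positivity
  have hq : 0 < s * u / (0 + a*(1+c)) := by positivity
  have key := arctan_lb hq
  have key2 : s * u * (0 + a*(1+c)) < g * D := by
    have heq : (s*u/(0+a*(1+c))) / (1 + (s*u/(0+a*(1+c)))^2) = s*u*(0+a*(1+c))/D := by
      rw [hDdef, ← hu]
      field_simp
    rw [heq] at key
    calc s * u * (0 + a*(1+c)) = s*u*(0+a*(1+c))/D * D := by field_simp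
    _ < g * D := by exact mul_lt_mul_of_pos_right key hD
  have heq2 : 2/u^3 * g + (2*a/u) * (s*(a*0-(1+c))/(u*D))
      = (2*g*D - 2*a*s*(1+c)*u)/(u^3*D) := by
    field_simp
    ring
  rw [heq2]
  apply div_pos _ (by positivity)
  nlinarith [key2]

lemma T_strictMonoOn_diag {θ : ℝ} (hθ1 : 0 < θ) (hθ2 : θ ≤ Real.pi/2) :
    StrictMonoOn (fun a => T a a θ) (Set.Ioi (0:ℝ)) := by
  have hs : 0 < Real.sin θ := Real.sin_pos_of_pos_of_lt_pi hθ1 (lt_of_le_of_lt hθ2 (by linarith [Real.pi_pos]))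
  have hc : 0 ≤ Real.cos θ := Real.cos_nonneg_of_mem_Icc ⟨by linarith [Real.pi_pos], hθ2⟩
  apply strictMonoOn_of_deriv_pos (convex_Ioi 0)
  · intro x hx
    have hx : (0:ℝ) < x := hx
    exact ((hasDeriv_Tdiag (Real.sin θ) (Real.cos θ) x hx hs hc).differentiableAt.continuousAt).continuousWithinAt
  · intro x hx
    rw [interior_Ioi] at hx
    have hx : (0:ℝ) < x := hx
    have := (hasDeriv_Tdiag (Real.sin θ) (Real.cos θ) x hx hs hc).deriv
    unfold T
    rw [this]
    exact deriv_Tdiag_pos (Real.sin θ) (Real.cos θ) x hx hs hc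

lemma T_anti_right {a θ : ℝ} (ha : 0 < a) (hθ1 : 0 < θ) (hθ2 : θ ≤ Real.pi/2)
    {b b' : ℝ} (hb : 0 < b) (hbb' : b ≤ b') : T a b' θ ≤ T a b θ := by
  have hs : 0 < Real.sin θ := Real.sin_pos_of_pos_of_lt_pi hθ1 (lt_of_le_of_lt hθ2 (by linarith [Real.pi_pos]))
  have hc : 0 ≤ Real.cos θ := Real.cos_nonneg_of_mem_Icc ⟨by linarith [Real.pi_pos], hθ2⟩
  unfold T
  have hu0 : (0:ℝ) < Real.sqrt (a^2+1) := by positivity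
  apply mul_le_mul_of_nonneg_left _ (by positivity)
  apply Real.arctan_strictMono.monotone
  have h1 : 0 < b + a * Real.cos θ := by positivity
  gcongr


theorem stmt_18 {F E : Type*} [Fintype F] [Fintype E] [Nonempty F] [DecidableEq F]
    (ε : E → F × F) (θ : E → ℝ) (hθ : ∀ e, 0 < θ e ∧ θ e ≤ Real.pi / 2)
    (hadj : ∀ f : F, ∃ e : E, (ε e).1 = f ∨ (ε e).2 = f)
    (That : F → ℝ) (hpos : ∀ f, 0 < That f)
    (hT : ∀ F' : Finset F, F'.Nonempty →
      ∑ f ∈ F', That f <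
        ∑ e ∈ Finset.univ.filter (fun e => (ε e).1 ∈ F' ∨ (ε e).2 ∈ F'),
          2 * θ e)
    (Ψ : (F → ℝ) → (F → ℝ))
    (hΨ : ∀ k : F → ℝ, (∀ f, 0 < k f) →
      ∀ f, 0 < Ψ k f ∧ Ttot ε θ (Function.update k f (Ψ k f)) f = That f)
    (k : F → ℝ) (hk : ∀ f, 0 < k f)
    (hsub : ∀ f, Ttot ε θ k f ≤ That f) :
    (∀ f, k f ≤ Ψ k f) ∧ (∀ f, Ttot ε θ (Ψ k) f ≤ That f) := by
  have hmono : ∀ (f : F) (x y : ℝ), 0 < x → x < y →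
      Ttot ε θ (Function.update k f x) f < Ttot ε θ (Function.update k f y) f := by
    intro f x y hx hxy
    have hy : 0 < y := hx.trans hxy
    have hterm : ∀ (g : F) (e : E), g ≠ f →
        T (Function.update k f x f) (Function.update k f x g) (θ e) <
        T (Function.update k f y f) (Function.update k f y g) (θ e) := by
      intro g e hg
      rw [Function.update_self, Function.update_self,
        Function.update_of_ne hg, Function.update_of_ne hg]
      exact T_strictMonoOn_left (hk g) (hθ e).1 (hθ e).2 hx hy hxy
    have hterm' : ∀ (g : F) (e : E),
        T (Function.update k f x f) (Function.update k f x g) (θ e) <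
        T (Function.update k f y f) (Function.update k f y g) (θ e) := by
      intro g e
      by_cases hg : g = f
      · subst hg
        simp only [Function.update_self]
        exact T_strictMonoOn_diag (hθ e).1 (hθ e).2 hx hy hxy
      · exact hterm g e hg
    unfold Ttot
    apply Finset.sum_lt_sum
    · intro e _
      apply add_le_add <;> split_ifs <;> first | exact le_rfl | exact (hterm' _ e).le
    · obtain ⟨e, he⟩ := hadj f
      refine ⟨e, Finset.mem_univ e, ?_⟩
      rcases he with h1 | h2
      · apply add_lt_add_of_lt_of_le
        · rw [if_pos h1, if_pos h1]; exact hterm' _ e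
        · split_ifs <;> first | exact le_rfl | exact (hterm' _ e).le
      · apply add_lt_add_of_le_of_lt
        · split_ifs <;> first | exact le_rfl | exact (hterm' _ e).le
        · rw [if_pos h2, if_pos h2]; exact hterm' _ e
  have part1 : ∀ f, k f ≤ Ψ k f := by
    intro f
    by_contra hcon
    push_neg at hcon
    have h := hmono f (Ψ k f) (k f) (hΨ k hk f).1 hcon
    rw [Function.update_eq_self] at h
    have h2 := (hΨ k hk f).2
    linarith [hsub f]
  refine ⟨part1, ?_⟩
  intro f
  rw [← (hΨ k hk f).2]
  have hΨpos : ∀ g, 0 < Ψ k g := fun g => lt_of_lt_of_le (hk g) (part1 g)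
  have hterm2 : ∀ (g : F) (e : E),
      T (Ψ k f) (Ψ k g) (θ e) ≤ T (Ψ k f) (Function.update k f (Ψ k f) g) (θ e) := by
    intro g e
    by_cases hg : g = f
    · subst hg; rw [Function.update_self]
    · rw [Function.update_of_ne hg]
      exact T_anti_right (hΨpos f) (hθ e).1 (hθ e).2 (hk g) (part1 g)
  unfold Ttot
  apply Finset.sum_le_sum
  intro e _
  simp only [Function.update_self]
  apply add_le_add <;> split_ifs <;> first | exact le_rfl | exact hterm2 _ e
end

section
/- With the weighted-graph setup below, let T̂ : F → ℝ with T̂ f > 0 for all f and T̂ ∈ 𝒯, and let Ψ be the Thurston adjustment map characterized by: for every positive vector k and every f ∈ F, Ψ k f > 0 and Ttot (Function.update k f (Ψ k f)) f = T̂ f. If k : F → ℝ is a positive vector with Ttot k f ≥ T̂ f for every f, then Ψ k f ≤ k f for every f and Ttot (Ψ k) f ≥ T̂ f for every f. (Hence Ψ preserves the superpattern set 𝒦₂ and the algorithm started above the target produces pointwise nonincreasing geodesic curvatures with total curvatures staying ≥ T̂.) -/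
open Real Filter Finset

lemma T_line_deriv {θ c d a : ℝ} (hs : 0 < Real.sin θ) (hc : 0 ≤ Real.cos θ)
    (hc0 : 0 ≤ c) (hd0 : 0 ≤ d) (hcd : 0 < c + d) (ha : 0 < a) :
    ∃ v, 0 < v ∧ HasDerivAt (fun x => T x (c * x + d) θ) v a := by
  have hs2 : Real.sqrt (a ^ 2 + 1) ^ 2 = a ^ 2 + 1 := Real.sq_sqrt (by positivity)
  set s := Real.sqrt (a ^ 2 + 1) with hsdef
  have hspos : 0 < s := Real.sqrt_pos.2 (by positivity)
  have hg : 0 < c * a + d + a * Real.cos θ := by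
    rcases eq_or_lt_of_le hd0 with h | h
    · have hcpos : 0 < c := by linarith
      nlinarith [mul_nonneg ha.le hc]
    · nlinarith [mul_nonneg hc0 ha.le, mul_nonneg ha.le hc]
  set g : ℝ := c * a + d + a * Real.cos θ with hgdef
  set u : ℝ := Real.sin θ * s / g with hudef
  set D : ℝ := g ^ 2 + Real.sin θ ^ 2 * (a ^ 2 + 1) with hDdef
  have hD : 0 < D := by positivity
  have hupos : 0 < u := by positivity
  -- derivatives
  have hq : HasDerivAt (fun x : ℝ => x ^ 2 + 1) (2 * a) a := by
    simpa using (hasDerivAt_pow 2 a).add_const 1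
  have hsqrt : HasDerivAt (fun x : ℝ => Real.sqrt (x ^ 2 + 1)) (2 * a / (2 * s)) a :=
    hq.sqrt (by positivity)
  have hnum : HasDerivAt (fun x : ℝ => 2 * x) 2 a := by
    simpa using (hasDerivAt_id a).const_mul (2:ℝ)
  have hf1 : HasDerivAt (fun x : ℝ => 2 * x / Real.sqrt (x ^ 2 + 1))
      ((2 * s - 2 * a * (2 * a / (2 * s))) / s ^ 2) a := hnum.div hsqrt hspos.ne'
  have hun : HasDerivAt (fun x : ℝ => Real.sin θ * Real.sqrt (x ^ 2 + 1))
      (Real.sin θ * (2 * a / (2 * s))) a := hsqrt.const_mul _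
  have hden : HasDerivAt (fun x : ℝ => c * x + d + x * Real.cos θ) (c + Real.cos θ) a := by
    have h1 : HasDerivAt (fun x : ℝ => c * x + d) c a := by
      simpa using ((hasDerivAt_id a).const_mul c).add_const d
    exact h1.add (by simpa using (hasDerivAt_id a).mul_const (Real.cos θ))
  have hu : HasDerivAt (fun x : ℝ => Real.sin θ * Real.sqrt (x ^ 2 + 1) / (c * x + d + x * Real.cos θ))
      ((Real.sin θ * (2 * a / (2 * s)) * g - Real.sin θ * s * (c + Real.cos θ)) / g ^ 2) a :=
    hun.div hden hg.ne'
  have harc := hu.arctan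
  have hT := hf1.mul harc
  clear_value s g u D
  refine ⟨_, ?_, show HasDerivAt (fun x => T x (c * x + d) θ) _ a from hT⟩
  simp only [← hsdef, ← hgdef, ← hudef]
  have h1u : 1 + u ^ 2 = D / g ^ 2 := by
    rw [hudef, hDdef, ← hs2]
    field_simp
  have e1 : (2 * s - 2 * a * (2 * a / (2 * s))) / s ^ 2 = 2 / s ^ 3 := by
    have h : 2 * s - 2 * a * (2 * a / (2 * s)) = 2 / s := by
      field_simp
      linear_combination hs2
    rw [h, div_div]
    ring_nf
  have e2 : 2 * a / s * (1 / (1 + u ^ 2) * ((Real.sin θ * (2 * a / (2 * s)) * g - Real.sin θ * s * (c + Real.cos θ)) / g ^ 2))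
      = 2 * a * Real.sin θ * (a * g - s ^ 2 * (c + Real.cos θ)) / (s ^ 2 * D) := by
    rw [h1u]
    field_simp
  have e3 : u / (1 + u ^ 2) = Real.sin θ * s * g / D := by
    rw [h1u, hudef]
    field_simp
  have hpoly : 2 * Real.sin θ * g + 2 * a * Real.sin θ * (a * g - s ^ 2 * (c + Real.cos θ))
      = 2 * Real.sin θ * d * s ^ 2 := by
    rw [hgdef]
    linear_combination (-(2 * Real.sin θ * (a * c + a * Real.cos θ + d))) * hs2
  have hlb : 2 * Real.sin θ * g / (s ^ 2 * D) + 2 * a * Real.sin θ * (a * g - s ^ 2 * (c + Real.cos θ)) / (s ^ 2 * D)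
      = 2 * Real.sin θ * d / D := by
    rw [← add_div, hpoly]
    field_simp
  have h5 : 2 * Real.sin θ * g / (s ^ 2 * D) < 2 / s ^ 3 * Real.arctan u := by
    calc 2 * Real.sin θ * g / (s ^ 2 * D) = 2 / s ^ 3 * (Real.sin θ * s * g / D) := by
          field_simp
      _ = 2 / s ^ 3 * (u / (1 + u ^ 2)) := by rw [e3]
      _ < 2 / s ^ 3 * Real.arctan u :=
          mul_lt_mul_of_pos_left (arctan_key hupos) (by positivity)
  have hd2 : 0 ≤ 2 * Real.sin θ * d / D := by positivity
  rw [e1, e2]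
  linarith

lemma T_strictMono_left {b θ : ℝ} (hb : 0 < b) (hs : 0 < Real.sin θ) (hc : 0 ≤ Real.cos θ) :
    StrictMonoOn (fun x => T x b θ) (Set.Ioi (0:ℝ)) := by
  have key : ∀ a : ℝ, 0 < a → ∃ v, 0 < v ∧ HasDerivAt (fun x => T x b θ) v a := by
    intro a ha
    obtain ⟨v, hv, hd⟩ := T_line_deriv (θ := θ) (c := 0) (d := b) hs hc le_rfl hb.le
      (by simpa using hb) ha
    refine ⟨v, hv, ?_⟩
    simpa only [zero_mul, zero_add] using hd
  apply strictMonoOn_of_deriv_pos (convex_Ioi 0)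
  · intro x hx
    obtain ⟨v, _, hd⟩ := key x hx
    exact hd.continuousAt.continuousWithinAt
  · intro x hx
    rw [interior_Ioi] at hx
    obtain ⟨v, hv, hd⟩ := key x hx
    rw [hd.deriv]; exact hv

lemma T_strictMono_diag {θ : ℝ} (hs : 0 < Real.sin θ) (hc : 0 ≤ Real.cos θ) :
    StrictMonoOn (fun x => T x x θ) (Set.Ioi (0:ℝ)) := by
  have key : ∀ a : ℝ, 0 < a → ∃ v, 0 < v ∧ HasDerivAt (fun x => T x x θ) v a := by
    intro a ha
    obtain ⟨v, hv, hd⟩ := T_line_deriv (θ := θ) (c := 1) (d := 0) hs hc zero_le_one le_rfl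
      (by norm_num) ha
    refine ⟨v, hv, ?_⟩
    simpa only [one_mul, add_zero] using hd
  apply strictMonoOn_of_deriv_pos (convex_Ioi 0)
  · intro x hx
    obtain ⟨v, _, hd⟩ := key x hx
    exact hd.continuousAt.continuousWithinAt
  · intro x hx
    rw [interior_Ioi] at hx
    obtain ⟨v, hv, hd⟩ := key x hx
    rw [hd.deriv]; exact hv

lemma T_anti {a b₁ b₂ θ : ℝ} (ha : 0 < a) (hb : 0 < b₁) (h12 : b₁ ≤ b₂)
    (hs : 0 < Real.sin θ) (hc : 0 ≤ Real.cos θ) : T a b₂ θ ≤ T a b₁ θ := by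
  unfold T
  have hsq : 0 < Real.sqrt (a ^ 2 + 1) := Real.sqrt_pos.2 (by positivity)
  apply mul_le_mul_of_nonneg_left _ (by positivity)
  apply Real.arctan_strictMono.monotone
  apply div_le_div_of_nonneg_left (by positivity) (by nlinarith [mul_nonneg ha.le hc])
  linarith

theorem stmt_19 {F E : Type*} [Fintype F] [Fintype E] [Nonempty F] [DecidableEq F]
    (ε : E → F × F) (θ : E → ℝ) (hθ : ∀ e, 0 < θ e ∧ θ e ≤ Real.pi / 2)
    (hadj : ∀ f : F, ∃ e : E, (ε e).1 = f ∨ (ε e).2 = f)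
    (That : F → ℝ) (hpos : ∀ f, 0 < That f)
    (hT : ∀ F' : Finset F, F'.Nonempty →
      ∑ f ∈ F', That f <
        ∑ e ∈ Finset.univ.filter (fun e => (ε e).1 ∈ F' ∨ (ε e).2 ∈ F'),
          2 * θ e)
    (Ψ : (F → ℝ) → (F → ℝ))
    (hΨ : ∀ k : F → ℝ, (∀ f, 0 < k f) →
      ∀ f, 0 < Ψ k f ∧ Ttot ε θ (Function.update k f (Ψ k f)) f = That f)
    (k : F → ℝ) (hk : ∀ f, 0 < k f)
    (hsup : ∀ f, That f ≤ Ttot ε θ k f) :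
    (∀ f, Ψ k f ≤ k f) ∧ (∀ f, That f ≤ Ttot ε θ (Ψ k) f) := by
  have hsin : ∀ e, 0 < Real.sin (θ e) := fun e =>
    Real.sin_pos_of_pos_of_lt_pi (hθ e).1 (lt_of_le_of_lt (hθ e).2 (by linarith [Real.pi_pos]))
  have hcos : ∀ e, 0 ≤ Real.cos (θ e) := fun e =>
    Real.cos_nonneg_of_mem_Icc ⟨by linarith [(hθ e).1, Real.pi_pos], (hθ e).2⟩
  have hΨpos : ∀ f, 0 < Ψ k f := fun f => (hΨ k hk f).1
  have part1 : ∀ f, Ψ k f ≤ k f := by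
    intro f
    by_contra hlt
    push_neg at hlt
    -- strict monotonicity of x ↦ Ttot (update k f x) f on Ioi 0
    have hmono : ∀ x ∈ Set.Ioi (0:ℝ), ∀ y ∈ Set.Ioi (0:ℝ), x < y →
        Ttot ε θ (Function.update k f x) f < Ttot ε θ (Function.update k f y) f := by
      intro x hx y hy hxy
      unfold Ttot
      have hterm : ∀ e : E,
          ((if (ε e).1 = f then T (Function.update k f x f) (Function.update k f x (ε e).2) (θ e) else 0) +
           (if (ε e).2 = f then T (Function.update k f x f) (Function.update k f x (ε e).1) (θ e) else 0)) ≤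
          ((if (ε e).1 = f then T (Function.update k f y f) (Function.update k f y (ε e).2) (θ e) else 0) +
           (if (ε e).2 = f then T (Function.update k f y f) (Function.update k f y (ε e).1) (θ e) else 0)) ∧
          (((ε e).1 = f ∨ (ε e).2 = f) →
          ((if (ε e).1 = f then T (Function.update k f x f) (Function.update k f x (ε e).2) (θ e) else 0) +
           (if (ε e).2 = f then T (Function.update k f x f) (Function.update k f x (ε e).1) (θ e) else 0)) <
          ((if (ε e).1 = f then T (Function.update k f y f) (Function.update k f y (ε e).2) (θ e) else 0) +
           (if (ε e).2 = f then T (Function.update k f y f) (Function.update k f y (ε e).1) (θ e) else 0))) := by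
        intro e
        by_cases h1 : (ε e).1 = f <;> by_cases h2 : (ε e).2 = f <;>
          simp only [h1, h2, if_pos, if_neg, Function.update_self,
            Function.update_of_ne, if_true, if_false]
        · -- self-loop
          have := T_strictMono_diag (hsin e) (hcos e) hx hy hxy
          constructor
          · exact add_le_add this.le this.le
          · exact fun _ => add_lt_add this this
        · -- only first end
          rw [Function.update_of_ne h2, Function.update_of_ne h2]
          have := T_strictMono_left (hk (ε e).2) (hsin e) (hcos e) hx hy hxy
          simp only at this
          exact ⟨by simpa using this.le, fun _ => by simpa using this⟩
        · rw [Function.update_of_ne h1, Function.update_of_ne h1]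
          have := T_strictMono_left (hk (ε e).1) (hsin e) (hcos e) hx hy hxy
          simp only at this
          exact ⟨by simpa using this.le, fun _ => by simpa using this⟩
        · simp [h1, h2]
      obtain ⟨e0, he0⟩ := hadj f
      exact Finset.sum_lt_sum (fun e _ => (hterm e).1) ⟨e0, Finset.mem_univ e0, (hterm e0).2 he0⟩
    have h1 := hmono (k f) (hk f) (Ψ k f) (hΨpos f) hlt
    rw [Function.update_eq_self] at h1
    rw [(hΨ k hk f).2] at h1
    exact absurd h1 (not_lt.2 (hsup f))
  refine ⟨part1, ?_⟩
  intro f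
  rw [← (hΨ k hk f).2]
  unfold Ttot
  apply Finset.sum_le_sum
  intro e _
  have hupd : ∀ g : F, Ψ k g ≤ Function.update k f (Ψ k f) g := by
    intro g
    by_cases hg : g = f
    · subst hg; rw [Function.update_self]
    · rw [Function.update_of_ne hg]; exact part1 g
  have hfeq : Function.update k f (Ψ k f) f = Ψ k f := Function.update_self f _ k
  apply add_le_add
  · by_cases h1 : (ε e).1 = f
    · simp only [h1, if_true, hfeq]
      exact T_anti (hΨpos f) (hΨpos (ε e).2) (hupd (ε e).2) (hsin e) (hcos e)
    · simp [h1]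
  · by_cases h2 : (ε e).2 = f
    · simp only [h2, if_true, hfeq]
      exact T_anti (hΨpos f) (hΨpos (ε e).1) (hupd (ε e).1) (hsin e) (hcos e)
    · simp [h2]
end
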